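/- arXiv:1505.04065 — 7 statements merged into one kernel-verified Lean document; each statement's English description precedes it below -/
import Mathlib

section
/- Let G be a finite additive abelian group with |G| = d ≥ 2 and let n ≥ 2. Let A : ZMod (d^(n-1)) → G be a cyclic de Bruijn sequence of order n-1 over G, i.e. the map sending each position i ∈ ZMod (d^(n-1)) to the window (A(i), A(i+1), …, A(i+n-2)) is a bijection onto G^(n-1). Suppose D : ZMod (d^(n-1)) → G satisfies D(i+1) = A(i) + D(i) for all i ∈ ZMod (d^(n-1)). Then the map sending each position i ∈ ZMod (d^(n-1)) to the translation-equivalence class of the window (D(i), D(i+1), …, D(i+n-1)) is a bijection onto the set of translation-equivalence classes of G^n; equivalently, every translation-equivalence class of n-tuples over G has exactly one representative occurring exactly once as a window of D (so D is a quotient de Bruijn string). -/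
/-- If `A` is a cyclic de Bruijn sequence of order `n-1` over a finite
abelian group `G` of order `d`, and `D` satisfies `D(i+1) = A(i) + D(i)`, then the map
sending each position to the translation-equivalence class of its length-`n` window
is a bijection onto the set of translation-equivalence classes of `n`-tuples over `G`;
equivalently, every `n`-tuple `w` over `G` has exactly one position `i` whose window is
translation-equivalent to `w`. -/
theorem quotient_de_bruijn_string
    (G : Type*) [AddCommGroup G] [Fintype G] (d n : ℕ)
    (hcard : Fintype.card G = d) (hd : 2 ≤ d) (hn : 2 ≤ n)
    (A D : ZMod (d ^ (n - 1)) → G)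
    (hA : Function.Bijective
      (fun i : ZMod (d ^ (n - 1)) =>
        fun j : Fin (n - 1) => A (i + (j.val : ZMod (d ^ (n - 1))))))
    (hD : ∀ i : ZMod (d ^ (n - 1)), D (i + 1) = A i + D i) :
    ∀ w : Fin n → G, ∃! i : ZMod (d ^ (n - 1)),
      ∃ c : G, ∀ j : Fin n, D (i + (j.val : ZMod (d ^ (n - 1)))) = w j + c := by
  intro w
  -- difference word
  set w' : Fin (n - 1) → G := fun j =>
    w ⟨j.val + 1, by omega⟩ - w ⟨j.val, by omega⟩ with hw'
  -- key equivalence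
  have key : ∀ i : ZMod (d ^ (n - 1)),
      (∃ c : G, ∀ j : Fin n, D (i + (j.val : ZMod (d ^ (n - 1)))) = w j + c) ↔
      (∀ j : Fin (n - 1), A (i + (j.val : ZMod (d ^ (n - 1)))) = w' j) := by
    intro i
    constructor
    · rintro ⟨c, hc⟩ j
      have h1 := hc ⟨j.val, by omega⟩
      have h2 := hc ⟨j.val + 1, by omega⟩
      have hDs := hD (i + (j.val : ZMod (d ^ (n - 1))))
      have hcast : ((j.val + 1 : ℕ) : ZMod (d ^ (n - 1))) = (j.val : ZMod (d ^ (n - 1))) + 1 := by push_cast; ring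
      rw [hcast] at h2
      simp only [hw']
      rw [← add_assoc] at h2
      rw [hDs, h1] at h2
      have : A (i + (j.val : ZMod (d ^ (n - 1)))) = (w ⟨j.val + 1, by omega⟩ + c) - (w ⟨j.val, by omega⟩ + c) := by
        rw [← h2]; abel
      rw [this]; abel
    · intro h
      refine ⟨D i - w ⟨0, by omega⟩, ?_⟩
      have main : ∀ k : ℕ, ∀ hk : k < n,
          D (i + (k : ZMod (d ^ (n - 1)))) = w ⟨k, hk⟩ + (D i - w ⟨0, by omega⟩) := by
        intro k
        induction k with
        | zero => intro hk; simp
        | succ k ih =>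
          intro hk
          have hk' : k < n := by omega
          have hk'' : k < n - 1 := by omega
          have hcast : ((k + 1 : ℕ) : ZMod (d ^ (n - 1))) = (k : ZMod (d ^ (n - 1))) + 1 := by push_cast; ring
          rw [hcast, ← add_assoc, hD, ih hk']
          have := h ⟨k, hk''⟩
          simp only [hw'] at this
          rw [this]
          abel
      intro j
      have := main j.val j.isLt
      convert this using 3
  obtain ⟨i, hi⟩ := hA.surjective w'
  refine ⟨i, (key i).mpr (fun j => congrFun hi j), fun y hy => ?_⟩
  exact hA.injective (by funext j; rw [(key y).mp hy j, ← congrFun hi j])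
end

section
/- Let n, k ≥ 1. Let D : ZMod (2^n) → ZMod 2 be a cyclic de Bruijn sequence of order n (the position-to-window-of-length-n map is a bijection onto (ZMod 2)^n), and let Q : ZMod (2^(k-1)) → ZMod 2 be a half de Bruijn sequence of order k: the map sending each position to the complementation class of its window of length k is a bijection onto the set of complementation classes of binary k-tuples, where the complementation class of w ∈ (ZMod 2)^k is {w, w + (1,1,…,1)}. Form the grid T : ZMod (2^(k-1)) × ZMod (2^n) → ZMod 2, T(i,j) = D(j) + Q(i). Fix r0 with 0 ≤ r0 < k and c0 with 0 ≤ c0 < n, and let B be the cross-shaped block pattern B = {(r0, c) : 0 ≤ c ≤ n-1} ∪ {(r, c0) : 0 ≤ r ≤ k-1}. Then every filling f : B → ZMod 2 occurs at exactly one position (i,j) ∈ ZMod (2^(k-1)) × ZMod (2^n), where f occurs at (i,j) iff T(i + r, j + c) = f(r,c) for every (r,c) ∈ B. -/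
private lemma zmod2_add_add : ∀ a b : ZMod 2, a + b + b = a := by decide

/-- Etzion's cross theorem: in the grid `T(i,j) = D(j) + Q(i)` built from a
binary de Bruijn sequence `D` of order `n` and a half de Bruijn sequence `Q` of order `k`,
every filling of a cross-shaped block pattern occurs at exactly one position. -/
theorem cross_pattern_unique_occurrence
    (n k : ℕ) (hn : 1 ≤ n) (hk : 1 ≤ k)
    (D : ZMod (2 ^ n) → ZMod 2)
    (hD : Function.Bijective
      (fun i : ZMod (2 ^ n) => fun j : Fin n => D (i + (j.val : ZMod (2 ^ n)))))
    (Q : ZMod (2 ^ (k - 1)) → ZMod 2)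
    (hQ : ∀ w : Fin k → ZMod 2, ∃! i : ZMod (2 ^ (k - 1)),
      ∃ c : ZMod 2, ∀ j : Fin k, Q (i + (j.val : ZMod (2 ^ (k - 1)))) = w j + c)
    (r0 c0 : ℕ) (hr0 : r0 < k) (hc0 : c0 < n)
    (B : Set (ℕ × ℕ))
    (hB : B = {rc : ℕ × ℕ | (rc.1 = r0 ∧ rc.2 < n) ∨ (rc.2 = c0 ∧ rc.1 < k)})
    (T : ZMod (2 ^ (k - 1)) × ZMod (2 ^ n) → ZMod 2)
    (hT : ∀ i j, T (i, j) = D j + Q i) :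
    ∀ f : ℕ × ℕ → ZMod 2, ∃! ij : ZMod (2 ^ (k - 1)) × ZMod (2 ^ n),
      ∀ rc ∈ B, T (ij.1 + (rc.1 : ZMod (2 ^ (k - 1))), ij.2 + (rc.2 : ZMod (2 ^ n))) = f rc := by
  intro f
  set w : Fin k → ZMod 2 := fun r => f (r.val, c0) with hw
  obtain ⟨i₀, ⟨ε, hε⟩, hiu⟩ := hQ w
  set v : Fin n → ZMod 2 := fun c => f (r0, c.val) + Q (i₀ + (r0 : ZMod (2 ^ (k - 1)))) with hv
  obtain ⟨j₀, hj₀⟩ := hD.2 v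
  have hDwin : ∀ c : Fin n, D (j₀ + (c.val : ZMod (2 ^ n))) = f (r0, c.val) + Q (i₀ + (r0 : ZMod (2 ^ (k - 1)))) := by
    intro c
    have := congrFun hj₀ c
    simpa [hv] using this
  refine ⟨(i₀, j₀), ?_, ?_⟩
  · intro rc hrc
    rw [hB] at hrc
    obtain ⟨r, c⟩ := rc
    rcases hrc with ⟨h1, h2⟩ | ⟨h1, h2⟩
    · simp only at h1 h2
      subst h1
      rw [hT, hDwin ⟨c, h2⟩]
      exact zmod2_add_add _ _
    · simp only at h1 h2
      rw [h1, hT]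
      have hD0 : D (j₀ + (c0 : ZMod (2 ^ n))) = f (r0, c0) + Q (i₀ + (r0 : ZMod (2 ^ (k - 1)))) :=
        hDwin ⟨c0, hc0⟩
      have hQr : Q (i₀ + (r : ZMod (2 ^ (k - 1)))) = f (r, c0) + ε := hε ⟨r, h2⟩
      have hQr0 : Q (i₀ + (r0 : ZMod (2 ^ (k - 1)))) = f (r0, c0) + ε := hε ⟨r0, hr0⟩
      rw [hD0, hQr, hQr0]
      have : ∀ a b e : ZMod 2, a + (a + e) + (b + e) = b := by decide
      apply this
  · rintro ⟨i, j⟩ hij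
    have hcol : ∀ r : Fin k, Q (i + (r.val : ZMod (2 ^ (k - 1)))) = w r + D (j + (c0 : ZMod (2 ^ n))) := by
      intro r
      have hmem : ((r.val : ℕ), c0) ∈ B := by rw [hB]; exact Or.inr ⟨rfl, r.isLt⟩
      have := hij _ hmem
      rw [hT] at this
      simp only [hw]
      have h2 : ∀ a b c : ZMod 2, a + b = c → b = c + a := by decide
      exact h2 _ _ _ this
    have hi : i = i₀ := hiu i ⟨_, hcol⟩
    subst hi
    have hrow : (fun c : Fin n => D (j + (c.val : ZMod (2 ^ n)))) = v := by
      funext c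
      have hmem : (r0, (c.val : ℕ)) ∈ B := by rw [hB]; exact Or.inl ⟨rfl, c.isLt⟩
      have := hij _ hmem
      rw [hT] at this
      simp only [hv]
      have h2 : ∀ a b c : ZMod 2, a + b = c → a = c + b := by decide
      exact h2 _ _ _ this
    have hj : j = j₀ := hD.1 (hrow.trans hj₀.symm)
    rw [hj]
end

section
/- Let d ≥ 2 and n, k ≥ 1, and work over ZMod d. Let p be a comb of order n and q a comb of order k. Let S : ZMod (d^n) → ZMod d be a de Bruijn sequence for the comb p over ZMod d, and let Q : ZMod (d^(k-1)) → ZMod d be a quotient string for the comb q over ZMod d. Let B be a block pattern with |B| = n + k - 1 such that the set of columns occupied by B equals the image of p, the set of rows occupied by B equals the image of q, and the connection graph of B is a tree (connected and acyclic). Then in the grid T : ZMod (d^(k-1)) × ZMod (d^n) → ZMod d defined by T(i,j) = S(j) + Q(i), every filling f : B → ZMod d occurs at exactly one position (i,j). -/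
/-- A comb of order `m`: a strictly increasing function `Fin m → ℕ` starting at `0`. -/
def IsComb (m : ℕ) (p : Fin m → ℕ) : Prop :=
  StrictMono p ∧ ∀ h : 0 < m, p ⟨0, h⟩ = 0

/-- The connection graph of a block pattern `B`: two distinct cells are adjacent iff they
lie in the same row with no cell of `B` strictly between them in that row, or in the same
column with no cell of `B` strictly between them in that column. -/
def connectionGraph (B : Finset (ℕ × ℕ)) : SimpleGraph {x // x ∈ B} :=
  SimpleGraph.fromRel (fun a b =>
    (a.1.1 = b.1.1 ∧ ∀ x ∈ B, x.1 = a.1.1 →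
        ¬(min a.1.2 b.1.2 < x.2 ∧ x.2 < max a.1.2 b.1.2)) ∨
    (a.1.2 = b.1.2 ∧ ∀ x ∈ B, x.2 = a.1.2 →
        ¬(min a.1.1 b.1.1 < x.1 ∧ x.1 < max a.1.1 b.1.1)))

/-- main theorem. If `S` is a de Bruijn sequence over `ZMod d` for a comb `p`
of order `n`, `Q` is a quotient string over `ZMod d` for a comb `q` of order `k`, and `B` is a
block pattern of `n + k - 1` cells whose column projection is the image of `p`, whose row
projection is the image of `q`, and whose connection graph is a tree, then in the grid
`T(i,j) = S(j) + Q(i)` every filling of `B` occurs at exactly one position. -/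
theorem tree_pattern_unique_occurrence
    (d n k : ℕ) (hd : 2 ≤ d) (hn : 1 ≤ n) (hk : 1 ≤ k)
    (p : Fin n → ℕ) (q : Fin k → ℕ) (hp : IsComb n p) (hq : IsComb k q)
    (S : ZMod (d ^ n) → ZMod d)
    (hS : Function.Bijective
      (fun i : ZMod (d ^ n) => fun t : Fin n => S (i + (p t : ZMod (d ^ n)))))
    (Q : ZMod (d ^ (k - 1)) → ZMod d)
    (hQ : ∀ w : Fin k → ZMod d, ∃! i : ZMod (d ^ (k - 1)),
      ∃ c : ZMod d, ∀ t : Fin k, Q (i + (q t : ZMod (d ^ (k - 1)))) = w t + c)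
    (B : Finset (ℕ × ℕ)) (hcard : B.card = n + k - 1)
    (hcols : B.image Prod.snd = Finset.image (fun t => p t) Finset.univ)
    (hrows : B.image Prod.fst = Finset.image (fun t => q t) Finset.univ)
    (htree : (connectionGraph B).Connected ∧ (connectionGraph B).IsAcyclic)
    (T : ZMod (d ^ (k - 1)) × ZMod (d ^ n) → ZMod d)
    (hT : ∀ i j, T (i, j) = S j + Q i) :
    ∀ f : ℕ × ℕ → ZMod d, ∃! ij : ZMod (d ^ (k - 1)) × ZMod (d ^ n),
      ∀ rc ∈ B, T (ij.1 + (rc.1 : ZMod (d ^ (k - 1))), ij.2 + (rc.2 : ZMod (d ^ n))) = f rc := by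
  classical
  haveI : NeZero d := ⟨by omega⟩
  haveI : NeZero (d ^ n) := ⟨pow_ne_zero _ (by omega)⟩
  haveI : NeZero (d ^ (k - 1)) := ⟨pow_ne_zero _ (by omega)⟩
  intro f
  set W : ZMod (d ^ (k - 1)) × ZMod (d ^ n) → ({x // x ∈ B} → ZMod d) :=
    fun ij a => T (ij.1 + (a.1.1 : ZMod (d ^ (k - 1))), ij.2 + (a.1.2 : ZMod (d ^ n)))
    with hWdef
  have hinj : Function.Injective W := by
    rintro ⟨i, j⟩ ⟨i', j'⟩ h
    have heq : ∀ a : {x // x ∈ B},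
        S (j + (a.1.2 : ZMod (d ^ n))) + Q (i + (a.1.1 : ZMod (d ^ (k - 1)))) =
        S (j' + (a.1.2 : ZMod (d ^ n))) + Q (i' + (a.1.1 : ZMod (d ^ (k - 1)))) := by
      intro a
      have := congrFun h a
      simpa [hWdef, hT] using this
    set δ : {x // x ∈ B} → ZMod d :=
      fun a => S (j + (a.1.2 : ZMod (d ^ n))) - S (j' + (a.1.2 : ZMod (d ^ n))) with hδ
    have hδQ : ∀ a : {x // x ∈ B},
        δ a = Q (i' + (a.1.1 : ZMod (d ^ (k - 1)))) - Q (i + (a.1.1 : ZMod (d ^ (k - 1)))) := by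
      intro a
      simp only [hδ]
      linear_combination heq a
    have adjδ : ∀ {a b : {x // x ∈ B}}, (connectionGraph B).Adj a b → δ a = δ b := by
      intro a b hab
      rw [connectionGraph, SimpleGraph.fromRel_adj] at hab
      rcases hab.2 with (⟨hr, -⟩ | ⟨hr, -⟩) | (⟨hr, -⟩ | ⟨hr, -⟩)
      · rw [hδQ a, hδQ b, hr]
      · simp only [hδ, hr]
      · rw [hδQ a, hδQ b, hr.symm]
      · simp only [hδ, hr.symm]
    have constδ : ∀ a b : {x // x ∈ B}, δ a = δ b := by
      intro a b
      obtain ⟨w⟩ := htree.1.preconnected a b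
      induction w with
      | nil => rfl
      | cons hadj _ ih => exact (adjδ hadj).trans ih
    have hBne : B.Nonempty := Finset.card_pos.mp (by omega)
    obtain ⟨a0, ha0⟩ := hBne
    set e : ZMod d := δ ⟨a0, ha0⟩ with he
    have hii' : i = i' := by
      have hex : ∀ t : Fin k, Q (i + (q t : ZMod (d ^ (k - 1)))) =
          Q (i' + (q t : ZMod (d ^ (k - 1)))) + (-e) := by
        intro t
        have hmem : q t ∈ B.image Prod.fst := by
          rw [hrows]; exact Finset.mem_image_of_mem _ (Finset.mem_univ t)
        obtain ⟨x, hx, hx1⟩ := Finset.mem_image.mp hmem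
        have h1 := hδQ ⟨x, hx⟩
        have h2 := constδ ⟨x, hx⟩ ⟨a0, ha0⟩
        simp only at h1
        rw [hx1] at h1
        rw [h2, ← he] at h1
        linear_combination h1
      exact (hQ (fun t => Q (i' + (q t : ZMod (d ^ (k - 1)))))).unique
        ⟨-e, hex⟩ ⟨0, fun t => by simp⟩
    have hjj' : j = j' := by
      apply hS.injective
      funext t
      simp only
      have hmem : p t ∈ B.image Prod.snd := by
        rw [hcols]; exact Finset.mem_image_of_mem _ (Finset.mem_univ t)
      obtain ⟨x, hx, hx2⟩ := Finset.mem_image.mp hmem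
      have h1 := heq ⟨x, hx⟩
      rw [hii'] at h1
      have h2 := add_right_cancel h1
      simp only at h2
      rw [hx2] at h2
      exact h2
    rw [hii', hjj']
  have hbij : Function.Bijective W := by
    rw [Fintype.bijective_iff_injective_and_card]
    refine ⟨hinj, ?_⟩
    rw [Fintype.card_prod, ZMod.card, ZMod.card, Fintype.card_fun, Fintype.card_coe,
      ZMod.card, hcard, ← pow_add]
    congr 1
    omega
  obtain ⟨ij, hij⟩ := hbij.2 (fun a => f a.1)
  refine ⟨ij, ?_, ?_⟩
  · intro rc hrc
    exact congrFun hij ⟨rc, hrc⟩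
  · intro ij' h'
    apply hinj
    rw [hij]
    funext a
    exact h' a.1 a.2
end

section
/- Let G be a finite additive abelian group with |G| = d ≥ 2 and let n, k ≥ 1. Let p be a comb of order n and q a comb of order k. Let S : ZMod (d^n) → G be a de Bruijn sequence for the comb p over G, and let Q : ZMod (d^(k-1)) → G be a quotient string for the comb q over G. Let B be a block pattern with |B| = n + k - 1 such that the set of columns occupied by B equals the image of p, the set of rows occupied by B equals the image of q, and the connection graph of B is a forest (acyclic) with exactly c connected components. Then in the grid T : ZMod (d^(k-1)) × ZMod (d^n) → G defined by T(i,j) = S(j) + Q(i), every filling f : B → G occurs at exactly d^(c-1) positions (i,j). -/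
open SimpleGraph

theorem SimpleGraph.IsAcyclic.exists_neighborSet_subsingleton {V : Type*} [Finite V] [Nonempty V]
    {Γ : SimpleGraph V} (hΓ : Γ.IsAcyclic) : ∃ v, (Γ.neighborSet v).Subsingleton := by
  obtain ⟨u, v, p, hp, hlongest⟩ := Walk.exists_isPath_forall_isPath_length_le_length Γ
  have hmem : ∀ w, Γ.Adj u w → w ∈ p.support := fun w hw => by
    by_contra hwp
    have := hlongest _ _ _ (hp.cons hwp (h := hw.symm))
    simp at this
  exact ⟨u, fun w₁ h₁ w₂ h₂ => (hΓ.eq_snd_of_adj_start hp h₁ (hmem _ h₁)).trans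
    (hΓ.eq_snd_of_adj_start hp h₂ (hmem _ h₂)).symm⟩

theorem SimpleGraph.Reachable.eq_of_forall_adj_eq {V β : Type*} {Γ : SimpleGraph V} {φ : V → β}
    (hφ : ∀ u w, Γ.Adj u w → φ u = φ w) {u w : V} (h : Γ.Reachable u w) : φ u = φ w := by
  rw [reachable_iff_reflTransGen] at h
  induction h with
  | refl => rfl
  | tail _ hadj ih => exact ih.trans (hφ _ _ hadj)

theorem Finset.exists_surjective_comp_eq_of_image_eq {α β ι : Type*} [DecidableEq β] [Fintype ι]
    {s : Finset α} {g : α → β} {p : ι → β} (hp : Function.Injective p)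
    (h : s.image g = Finset.univ.image p) :
    ∃ c : {x // x ∈ s} → ι, Function.Surjective c ∧ ∀ v, p (c v) = g v.1 := by
  have hmem : ∀ v : {x // x ∈ s}, ∃ t, p t = g v.1 := fun v => by
    simpa [h] using Finset.mem_image_of_mem g v.2
  choose c hc using hmem
  refine ⟨c, fun t => ?_, hc⟩
  obtain ⟨x, hx, hxt⟩ : ∃ x ∈ s, g x = p t := by
    simpa [← Finset.mem_image, h] using Finset.mem_image_of_mem p (Finset.mem_univ t)
  exact ⟨⟨x, hx⟩, hp (by rw [hc, hxt])⟩

theorem Nat.card_subtype_mul_card_eq_of_bijective {X Y G : Type*} {φ : X × G → Y}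
    (hφ : Function.Bijective φ) {P : X → Prop} {R : Y → Prop} (h : ∀ x g, R (φ (x, g)) ↔ P x) :
    Nat.card {x // P x} * Nat.card G = Nat.card {y // R y} := by
  rw [← Nat.card_prod]
  exact Nat.card_congr (Equiv.prodSubtypeFstEquivSubtypeProd.symm.trans
    (Equiv.subtypeEquiv (Equiv.ofBijective φ hφ) fun x => (h x.1 x.2).symm))

theorem bijective_add_sub_windows {I J ι κ G : Type*} [AddCommGroup G] [Nonempty κ]
    {u : J → ι → G} (hu : Function.Bijective u) {v : I → κ → G}
    (hv : ∀ w : κ → G, ∃! i, ∃ g : G, ∀ s, v i s = w s + g) :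
    Function.Bijective fun x : (I × J) × G =>
      ((fun t => u x.1.2 t + x.2, fun s => v x.1.1 s - x.2) : (ι → G) × (κ → G)) := by
  constructor
  · rintro ⟨⟨i, j⟩, g⟩ ⟨⟨i', j'⟩, g'⟩ h
    simp only [Prod.mk.injEq, funext_iff] at h
    obtain ⟨hu', hv'⟩ := h
    obtain rfl : i = i' := (hv fun s => v i' s - g').unique
      ⟨g, fun s => sub_eq_iff_eq_add.1 (hv' s)⟩ ⟨g', fun s => (sub_add_cancel _ _).symm⟩
    obtain rfl : g = g' := sub_right_inj.1 (hv' (Classical.arbitrary κ))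
    obtain rfl : j = j' := hu.1 (funext fun t => add_right_cancel (hu' t))
    rfl
  · rintro ⟨α, β⟩
    obtain ⟨i, ⟨g, hg⟩, -⟩ := hv β
    obtain ⟨j, hj⟩ := hu.2 fun t => α t - g
    refine ⟨((i, j), g), ?_⟩
    simp [hj, hg]

section Splitting

variable {V ι κ G : Type*} [AddCommGroup G]

def IsSplitting (col : V → ι) (row : V → κ) (f : V → G) (ab : (ι → G) × (κ → G)) : Prop :=
  ∀ v, ab.1 (col v) + ab.2 (row v) = f v

theorem IsSplitting.sub_eq_sub {col : V → ι} {row : V → κ} {f : V → G} {a₀ a : ι → G}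
    {b₀ b : κ → G} (h₀ : IsSplitting col row f (a₀, b₀)) (h : IsSplitting col row f (a, b))
    (v : V) : a (col v) - a₀ (col v) = b₀ (row v) - b (row v) := by
  rw [sub_eq_sub_iff_add_eq_add, h v, ← h₀ v, add_comm]

theorem card_splittings_eq (Γ : SimpleGraph V) {col : V → ι} {row : V → κ} {f : V → G}
    (hadj : ∀ u w, Γ.Adj u w → row u = row w ∨ col u = col w)
    (hreach : ∀ u w, row u = row w ∨ col u = col w → Γ.Reachable u w)
    (hcol : Function.Surjective col) (hrow : Function.Surjective row) {a₀ : ι → G} {b₀ : κ → G}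
    (h₀ : IsSplitting col row f (a₀, b₀)) :
    Nat.card {ab // IsSplitting col row f ab} = Nat.card (Γ.ConnectedComponent → G) := by
  let δ : {ab // IsSplitting col row f ab} → V → G := fun ab v => ab.1.1 (col v) - a₀ (col v)
  have hδ_adj : ∀ ab u w, Γ.Adj u w → δ ab u = δ ab w := fun ab u w huw => by
    rcases hadj u w huw with hrow_eq | hcol_eq
    · simp only [δ, h₀.sub_eq_sub ab.2, hrow_eq]
    · simp only [δ, hcol_eq]
  have hmk_col : ∀ v, Γ.connectedComponentMk (Function.surjInv hcol (col v)) =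
      Γ.connectedComponentMk v := fun v =>
    ConnectedComponent.sound (hreach _ _ (Or.inr (Function.surjInv_eq hcol _)))
  have hmk_row : ∀ v, Γ.connectedComponentMk (Function.surjInv hrow (row v)) =
      Γ.connectedComponentMk v := fun v =>
    ConnectedComponent.sound (hreach _ _ (Or.inl (Function.surjInv_eq hrow _)))
  refine Nat.card_congr
    { toFun := fun ab => ConnectedComponent.lift (δ ab) fun u w p _ =>
        p.reachable.eq_of_forall_adj_eq (hδ_adj ab)
      invFun := fun h =>
        ⟨(fun t => a₀ t + h (Γ.connectedComponentMk (Function.surjInv hcol t)),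
          fun s => b₀ s - h (Γ.connectedComponentMk (Function.surjInv hrow s))), fun v => by
          simp only [hmk_col, hmk_row, ← h₀ v]
          abel⟩
      left_inv := fun ab => Subtype.ext (Prod.ext (funext fun t => ?_) (funext fun s => ?_))
      right_inv := fun h => funext fun C => ?_ }
  · simp only [ConnectedComponent.lift_mk, δ, Function.surjInv_eq]
    abel
  · simp only [ConnectedComponent.lift_mk, δ, h₀.sub_eq_sub ab.2, Function.surjInv_eq]
    abel
  · induction C using ConnectedComponent.ind with
    | h v => simp only [ConnectedComponent.lift_mk, δ, hmk_col, add_sub_cancel_left]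

end Splitting

-- Along axis `true` a cell `(r, c)` lies on line `r` at position `c`; along `false`, on line `c`
-- at position `r`.
def lineCoord : Bool → ℕ × ℕ → ℕ
  | true, x => x.1
  | false, x => x.2

def posCoord : Bool → ℕ × ℕ → ℕ
  | true, x => x.2
  | false, x => x.1

theorem eq_of_lineCoord_eq_of_posCoord_eq {a : Bool} {x y : ℕ × ℕ}
    (hline : lineCoord a x = lineCoord a y) (hpos : posCoord a x = posCoord a y) : x = y := by
  cases a
  · exact Prod.ext hpos hline
  · exact Prod.ext hline hpos

def Consecutive (B : Finset (ℕ × ℕ)) (a : Bool) (x y : ℕ × ℕ) : Prop :=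
  lineCoord a x = lineCoord a y ∧ ∀ z ∈ B, lineCoord a z = lineCoord a x →
    ¬(min (posCoord a x) (posCoord a y) < posCoord a z ∧
      posCoord a z < max (posCoord a x) (posCoord a y))

section ConnectionGraph

variable {B : Finset (ℕ × ℕ)}

theorem Consecutive.symm {a : Bool} {x y : ℕ × ℕ}
    (h : Consecutive B a x y) : Consecutive B a y x := by
  refine ⟨h.1.symm, fun z hz hzy => ?_⟩
  rw [min_comm, max_comm]
  exact h.2 z hz (hzy.trans h.1.symm)

theorem connectionGraph_adj_iff {u w : {x // x ∈ B}} :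
    (connectionGraph B).Adj u w ↔ u ≠ w ∧ ∃ a, Consecutive B a u w := by
  have hrel : ∀ u w : {x // x ∈ B}, (∃ a, Consecutive B a u w) ↔
      (u.1.1 = w.1.1 ∧ ∀ x ∈ B, x.1 = u.1.1 →
        ¬(min u.1.2 w.1.2 < x.2 ∧ x.2 < max u.1.2 w.1.2)) ∨
      (u.1.2 = w.1.2 ∧ ∀ x ∈ B, x.2 = u.1.2 →
        ¬(min u.1.1 w.1.1 < x.1 ∧ x.1 < max u.1.1 w.1.1)) := fun u w => by
    rw [Bool.exists_bool, or_comm]; rfl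
  rw [connectionGraph, fromRel_adj, ← hrel, ← hrel]
  refine and_congr_right fun _ => ⟨?_, fun h => Or.inl h⟩
  rintro (h | ⟨a, h⟩)
  · exact h
  · exact ⟨a, h.symm⟩

theorem connectionGraph_reachable_of_lineCoord_eq (a : Bool) {u w : {x // x ∈ B}}
    (h : lineCoord a u.1 = lineCoord a w.1) : (connectionGraph B).Reachable u w := by
  induction hm : max (posCoord a u.1) (posCoord a w.1) - min (posCoord a u.1) (posCoord a w.1)
    using Nat.strong_induction_on generalizing u w with
  | _ m ih =>
  by_cases huw : u = w
  · exact huw ▸ Reachable.refl u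
  by_cases hgap : ∃ z : {x // x ∈ B}, lineCoord a z.1 = lineCoord a u.1 ∧
      min (posCoord a u.1) (posCoord a w.1) < posCoord a z.1 ∧
      posCoord a z.1 < max (posCoord a u.1) (posCoord a w.1)
  · obtain ⟨z, hz, hlt, hgt⟩ := hgap
    exact (ih _ (by omega) hz.symm rfl).trans (ih _ (by omega) (hz.trans h) rfl)
  · refine Adj.reachable (connectionGraph_adj_iff.2 ⟨huw, a, h, fun z hzB hz => ?_⟩)
    exact fun hbetween => hgap ⟨⟨z, hzB⟩, hz, hbetween⟩

theorem connectionGraph_reachable_of_fst_eq_or_snd_eq {u w : {x // x ∈ B}}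
    (h : u.1.1 = w.1.1 ∨ u.1.2 = w.1.2) : (connectionGraph B).Reachable u w :=
  h.elim (connectionGraph_reachable_of_lineCoord_eq true)
    (connectionGraph_reachable_of_lineCoord_eq false)

theorem connectionGraph_fst_eq_or_snd_eq_of_adj {u w : {x // x ∈ B}}
    (h : (connectionGraph B).Adj u w) : u.1.1 = w.1.1 ∨ u.1.2 = w.1.2 := by
  obtain ⟨-, a, hline, -⟩ := connectionGraph_adj_iff.1 h
  cases a
  · exact Or.inr hline
  · exact Or.inl hline

theorem connectionGraph_exists_adj_between (a : Bool) {v y : {x // x ∈ B}}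
    (hline : lineCoord a y.1 = lineCoord a v.1) (hne : y ≠ v) :
    ∃ z, (connectionGraph B).Adj v z ∧ lineCoord a z.1 = lineCoord a v.1 ∧
      (posCoord a y.1 < posCoord a v.1 ↔ posCoord a z.1 < posCoord a v.1) := by
  classical
  let gap : {x // x ∈ B} → ℕ := fun x =>
    max (posCoord a x.1) (posCoord a v.1) - min (posCoord a x.1) (posCoord a v.1)
  let between := Finset.univ.filter fun x : {x // x ∈ B} => x ≠ v ∧
    lineCoord a x.1 = lineCoord a v.1 ∧ min (posCoord a y.1) (posCoord a v.1) ≤ posCoord a x.1 ∧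
      posCoord a x.1 ≤ max (posCoord a y.1) (posCoord a v.1)
  -- `z` is the cell of the line on `y`'s side of `v` that is closest to `v`.
  obtain ⟨z, hz, hmin⟩ := between.exists_min_image gap ⟨y, by simp [between, hne, hline]⟩
  simp only [between, Finset.mem_filter, Finset.mem_univ, true_and, Subtype.forall, ne_eq,
    Subtype.ext_iff] at hz hmin
  obtain ⟨hzv, hzline, hzlo, hzhi⟩ := hz
  have hpos_ne : ∀ {x : ℕ × ℕ}, x ≠ v.1 → lineCoord a x = lineCoord a v.1 →
      posCoord a x ≠ posCoord a v.1 := fun hxv hx h =>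
    hxv (eq_of_lineCoord_eq_of_posCoord_eq hx h)
  have hside : posCoord a y.1 < posCoord a v.1 ↔ posCoord a z.1 < posCoord a v.1 := by
    have := hpos_ne hzv hzline
    have := hpos_ne (fun h => hne (Subtype.ext h)) hline
    omega
  refine ⟨z, connectionGraph_adj_iff.2 ⟨fun h => hzv (congrArg Subtype.val h).symm, a,
    hzline.symm, fun x hxB hx hxbetween => ?_⟩, hzline, hside⟩
  have hxv : x ≠ v.1 := by
    rintro rfl
    omega
  have := hmin x hxB ⟨hxv, hx, by omega, by omega⟩
  simp only [gap] at this
  omega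

theorem connectionGraph_exists_lone_of_subsingleton {v : {x // x ∈ B}}
    (hv : ((connectionGraph B).neighborSet v).Subsingleton) :
    ∃ a, ∀ x : {x // x ∈ B}, lineCoord a x.1 = lineCoord a v.1 → x = v := by
  by_contra! h
  obtain ⟨y, hy, hyv⟩ := h true
  obtain ⟨y', hy', hy'v⟩ := h false
  obtain ⟨z, hz, hzrow, -⟩ := connectionGraph_exists_adj_between true hy hyv
  obtain ⟨z', hz', hz'col, -⟩ := connectionGraph_exists_adj_between false hy' hy'v
  obtain rfl : z = z' := hv hz hz'
  exact hz.ne (Subtype.ext (Prod.ext hzrow.symm hz'col.symm))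

theorem connectionGraph_not_between_of_subsingleton (a : Bool) {v : {x // x ∈ B}}
    (hv : ((connectionGraph B).neighborSet v).Subsingleton) {x y : ℕ × ℕ} (hxB : x ∈ B)
    (hyB : y ∈ B) (hx : lineCoord a x = lineCoord a v.1) (hy : lineCoord a y = lineCoord a v.1) :
    ¬(posCoord a x < posCoord a v.1 ∧ posCoord a v.1 < posCoord a y) := by
  rintro ⟨hxv, hvy⟩
  obtain ⟨z, hz, -, hzside⟩ := connectionGraph_exists_adj_between a (y := ⟨x, hxB⟩) hx
    (by rintro rfl; exact lt_irrefl _ hxv)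
  obtain ⟨z', hz', -, hz'side⟩ := connectionGraph_exists_adj_between a (y := ⟨y, hyB⟩) hy
    (by rintro rfl; exact lt_irrefl _ hvy)
  obtain rfl : z = z' := hv hz hz'
  dsimp only at hzside hz'side
  omega

theorem connectionGraph_erase_isAcyclic (hB : (connectionGraph B).IsAcyclic)
    {v : {x // x ∈ B}} (hv : ((connectionGraph B).neighborSet v).Subsingleton) :
    (connectionGraph (B.erase v.1)).IsAcyclic := by
  refine hB.comap ⟨fun x => ⟨x.1, Finset.mem_of_mem_erase x.2⟩, fun {x y} hxy => ?_⟩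
    fun x y h => Subtype.ext (by simpa using congrArg Subtype.val h)
  obtain ⟨hne, a, hline, hgap⟩ := connectionGraph_adj_iff.1 hxy
  refine connectionGraph_adj_iff.2
    ⟨fun h => hne (Subtype.ext (congrArg Subtype.val h :)), a, hline, fun z hzB hz => ?_⟩
  dsimp only at hz ⊢
  by_cases hzv : z = v.1
  · subst hzv
    have hxB := Finset.mem_of_mem_erase x.2
    have hyB := Finset.mem_of_mem_erase y.2
    have := connectionGraph_not_between_of_subsingleton a hv hxB hyB hz.symm
      (hline.symm.trans hz.symm)
    have := connectionGraph_not_between_of_subsingleton a hv hyB hxB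
      (hline.symm.trans hz.symm) hz.symm
    omega
  · exact hgap z (Finset.mem_erase.2 ⟨hzv, hzB⟩) hz

theorem connectionGraph_exists_add_eq {G : Type*} [AddCommGroup G] (f : ℕ × ℕ → G)
    (hB : (connectionGraph B).IsAcyclic) : ∃ α β : ℕ → G, ∀ x ∈ B, α x.2 + β x.1 = f x := by
  induction B using Finset.strongInduction with
  | _ B ih =>
  rcases B.eq_empty_or_nonempty with rfl | ⟨v₀, hv₀⟩
  · exact ⟨0, 0, by simp⟩
  have : Nonempty {x // x ∈ B} := ⟨⟨v₀, hv₀⟩⟩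
  obtain ⟨v, hv⟩ := hB.exists_neighborSet_subsingleton
  obtain ⟨α, β, hαβ⟩ := ih _ (Finset.erase_ssubset v.2) (connectionGraph_erase_isAcyclic hB hv)
  obtain ⟨a, hlone⟩ := connectionGraph_exists_lone_of_subsingleton hv
  have hother : ∀ x ∈ B, x ≠ v.1 → lineCoord a x ≠ lineCoord a v.1 := fun x hx hxv h =>
    hxv (congrArg Subtype.val (hlone ⟨x, hx⟩ h))
  cases a
  · refine ⟨Function.update α v.1.2 (f v - β v.1.1), β, fun x hx => ?_⟩
    rcases eq_or_ne x v.1 with rfl | hxv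
    · simp
    · rw [Function.update_of_ne (show x.2 ≠ v.1.2 from hother x hx hxv)]
      exact hαβ x (Finset.mem_erase.2 ⟨hxv, hx⟩)
  · refine ⟨α, Function.update β v.1.1 (f v - α v.1.2), fun x hx => ?_⟩
    rcases eq_or_ne x v.1 with rfl | hxv
    · simp
    · rw [Function.update_of_ne (show x.1 ≠ v.1.1 from hother x hx hxv)]
      exact hαβ x (Finset.mem_erase.2 ⟨hxv, hx⟩)

theorem card_splittings_connectionGraph {ι κ G : Type*} [AddCommGroup G]
    (hB : (connectionGraph B).IsAcyclic) (f : ℕ × ℕ → G) {p : ι → ℕ} {q : κ → ℕ}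
    (hp : Function.Injective p) (hq : Function.Injective q) {col : {x // x ∈ B} → ι}
    {row : {x // x ∈ B} → κ} (hcol_surj : Function.Surjective col)
    (hrow_surj : Function.Surjective row) (hcol : ∀ v, p (col v) = v.1.2)
    (hrow : ∀ v, q (row v) = v.1.1) :
    Nat.card {ab // IsSplitting col row (fun v => f v.1) ab} =
      Nat.card G ^ Nat.card (connectionGraph B).ConnectedComponent := by
  obtain ⟨α, β, hαβ⟩ := connectionGraph_exists_add_eq f hB
  have hcol_eq : ∀ u w, col u = col w ↔ u.1.2 = w.1.2 := fun u w => by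
    rw [← hp.eq_iff, hcol, hcol]
  have hrow_eq : ∀ u w, row u = row w ↔ u.1.1 = w.1.1 := fun u w => by
    rw [← hq.eq_iff, hrow, hrow]
  rw [← Nat.card_fun]
  refine card_splittings_eq _ (fun u w h => ?_) (fun u w h => ?_) hcol_surj hrow_surj
    (a₀ := fun t => α (p t)) (b₀ := fun s => β (q s)) fun v => ?_
  · rw [hrow_eq, hcol_eq]
    exact connectionGraph_fst_eq_or_snd_eq_of_adj h
  · rw [hrow_eq, hcol_eq] at h
    exact connectionGraph_reachable_of_fst_eq_or_snd_eq h
  · simp only [hcol, hrow]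
    exact hαβ v.1 v.2

end ConnectionGraph

theorem forest_pattern_occurrence_count_general
    (G : Type*) [AddCommGroup G] [Fintype G] (d n k c : ℕ)
    (hcardG : Fintype.card G = d) (hk : 1 ≤ k)
    (p : Fin n → ℕ) (q : Fin k → ℕ) (hp : IsComb n p) (hq : IsComb k q)
    (S : ZMod (d ^ n) → G)
    (hS : Function.Bijective
      (fun i : ZMod (d ^ n) => fun t : Fin n => S (i + (p t : ZMod (d ^ n)))))
    (Q : ZMod (d ^ (k - 1)) → G)
    (hQ : ∀ w : Fin k → G, ∃! i : ZMod (d ^ (k - 1)),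
      ∃ g : G, ∀ t : Fin k, Q (i + (q t : ZMod (d ^ (k - 1)))) = w t + g)
    (B : Finset (ℕ × ℕ))
    (hcols : B.image Prod.snd = Finset.image (fun t => p t) Finset.univ)
    (hrows : B.image Prod.fst = Finset.image (fun t => q t) Finset.univ)
    (hforest : (connectionGraph B).IsAcyclic)
    (hcomps : Nat.card (connectionGraph B).ConnectedComponent = c)
    (T : ZMod (d ^ (k - 1)) × ZMod (d ^ n) → G)
    (hT : ∀ i j, T (i, j) = S j + Q i) :
    ∀ f : ℕ × ℕ → G,
      Nat.card {ij : ZMod (d ^ (k - 1)) × ZMod (d ^ n) //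
        ∀ rc ∈ B, T (ij.1 + (rc.1 : ZMod (d ^ (k - 1))), ij.2 + (rc.2 : ZMod (d ^ n))) = f rc}
        = d ^ (c - 1) := by
  intro f
  obtain ⟨col, hcol_surj, hcol⟩ :=
    Finset.exists_surjective_comp_eq_of_image_eq hp.1.injective hcols
  obtain ⟨row, hrow_surj, hrow⟩ :=
    Finset.exists_surjective_comp_eq_of_image_eq hq.1.injective hrows
  have : Nonempty (Fin k) := ⟨⟨0, hk⟩⟩
  have hocc := Nat.card_subtype_mul_card_eq_of_bijective (bijective_add_sub_windows hS hQ)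
    (P := fun ij => ∀ rc ∈ B,
      T (ij.1 + (rc.1 : ZMod (d ^ (k - 1))), ij.2 + (rc.2 : ZMod (d ^ n))) = f rc)
    (R := IsSplitting col row fun v => f v.1) fun ij g => by
      simp only [IsSplitting, Subtype.forall, hcol, hrow, add_add_sub_cancel, hT]
  rw [card_splittings_connectionGraph hforest f hp.1.injective hq.1.injective hcol_surj
    hrow_surj hcol hrow, hcomps, Nat.card_eq_fintype_card (α := G), hcardG] at hocc
  obtain ⟨v, -⟩ := hrow_surj ⟨0, hk⟩
  have : Nonempty (connectionGraph B).ConnectedComponent :=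
    ⟨(connectionGraph B).connectedComponentMk v⟩
  have hc : 0 < c := hcomps ▸ Nat.card_pos
  have hd : 0 < d := hcardG ▸ Fintype.card_pos
  rw [← Nat.sub_add_cancel hc, pow_succ] at hocc
  exact Nat.eq_of_mul_eq_mul_right hd hocc

/-- if the connection graph of the block pattern `B` is a forest with exactly
`c` connected components, then in the grid `T(i,j) = S(j) + Q(i)` every filling of `B`
occurs at exactly `d^(c-1)` positions. -/
theorem forest_pattern_occurrence_count
    (G : Type*) [AddCommGroup G] [Fintype G] (d n k c : ℕ)
    (hcardG : Fintype.card G = d) (hd : 2 ≤ d) (hn : 1 ≤ n) (hk : 1 ≤ k)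
    (p : Fin n → ℕ) (q : Fin k → ℕ) (hp : IsComb n p) (hq : IsComb k q)
    (S : ZMod (d ^ n) → G)
    (hS : Function.Bijective
      (fun i : ZMod (d ^ n) => fun t : Fin n => S (i + (p t : ZMod (d ^ n)))))
    (Q : ZMod (d ^ (k - 1)) → G)
    (hQ : ∀ w : Fin k → G, ∃! i : ZMod (d ^ (k - 1)),
      ∃ g : G, ∀ t : Fin k, Q (i + (q t : ZMod (d ^ (k - 1)))) = w t + g)
    (B : Finset (ℕ × ℕ)) (hcard : B.card = n + k - 1)
    (hcols : B.image Prod.snd = Finset.image (fun t => p t) Finset.univ)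
    (hrows : B.image Prod.fst = Finset.image (fun t => q t) Finset.univ)
    (hforest : (connectionGraph B).IsAcyclic)
    (hcomps : Nat.card (connectionGraph B).ConnectedComponent = c)
    (T : ZMod (d ^ (k - 1)) × ZMod (d ^ n) → G)
    (hT : ∀ i j, T (i, j) = S j + Q i) :
    ∀ f : ℕ × ℕ → G,
      Nat.card {ij : ZMod (d ^ (k - 1)) × ZMod (d ^ n) //
        ∀ rc ∈ B, T (ij.1 + (rc.1 : ZMod (d ^ (k - 1))), ij.2 + (rc.2 : ZMod (d ^ n))) = f rc}
        = d ^ (c - 1) :=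
  forest_pattern_occurrence_count_general G d n k c hcardG hk p q hp hq S hS Q hQ B hcols hrows
    hforest hcomps T hT
end

section
/- Let G be a finite additive abelian group with |G| = d ≥ 2 and let n, k ≥ 1. Let p be a comb of order n and q a comb of order k. Let S : ZMod (d^n) → G be a de Bruijn sequence for the comb p over G, and let Q : ZMod (d^(k-1)) → G be a quotient string for the comb q over G. Let B be a block pattern with |B| = n + k - 1 such that the set of columns occupied by B equals the image of p, the set of rows occupied by B equals the image of q, and the connection graph of B contains a cycle (i.e. is not acyclic). Then in the grid T : ZMod (d^(k-1)) × ZMod (d^n) → G defined by T(i,j) = S(j) + Q(i), there exists a filling f : B → G that occurs at no position (i,j). -/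
open SimpleGraph Finset

/-- Cells of `B` that are neighbours on a common line: `ℓ` names the line of a cell and `σ` its
position along that line. -/
def consecutiveGraph (B : Finset (ℕ × ℕ)) (ℓ σ : ℕ × ℕ → ℕ) : SimpleGraph B :=
  SimpleGraph.fromRel fun a b => ℓ a.1 = ℓ b.1 ∧
    ∀ x ∈ B, ℓ x = ℓ a.1 → ¬(min (σ a.1) (σ b.1) < σ x ∧ σ x < max (σ a.1) (σ b.1))

theorem connectionGraph_eq_sup (B : Finset (ℕ × ℕ)) :
    connectionGraph B =
      consecutiveGraph B Prod.fst Prod.snd ⊔ consecutiveGraph B Prod.snd Prod.fst := by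
  ext a b
  simp only [connectionGraph, consecutiveGraph, sup_adj, fromRel_adj]
  tauto

namespace consecutiveGraph

variable {B : Finset (ℕ × ℕ)} {ℓ σ : ℕ × ℕ → ℕ}

theorem line_eq_of_adj {a b : B} (h : (consecutiveGraph B ℓ σ).Adj a b) : ℓ a.1 = ℓ b.1 :=
  h.2.elim And.left fun h => h.1.symm

theorem adj_iff_of_lt {a b : B} (h : σ a.1 < σ b.1) :
    (consecutiveGraph B ℓ σ).Adj a b ↔
      ℓ a.1 = ℓ b.1 ∧ ∀ x ∈ B, ℓ x = ℓ a.1 → ¬(σ a.1 < σ x ∧ σ x < σ b.1) := by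
  have hne : a ≠ b := by rintro rfl; exact lt_irrefl _ h
  simp only [consecutiveGraph, fromRel_adj, ne_eq, hne, not_false_eq_true, true_and,
    min_eq_left h.le, max_eq_right h.le, min_eq_right h.le, max_eq_left h.le]
  refine ⟨?_, Or.inl⟩
  rintro (h | ⟨hℓ, hx⟩)
  · exact h
  · exact ⟨hℓ.symm, fun x hxB hxℓ => hx x hxB (hxℓ.trans hℓ.symm)⟩

theorem exists_adj_of_lt {a b : B} (hℓ : ℓ a.1 = ℓ b.1) (h : σ a.1 < σ b.1) :
    ∃ m : B, (consecutiveGraph B ℓ σ).Adj a m ∧ σ a.1 < σ m.1 ∧ σ m.1 ≤ σ b.1 := by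
  classical
  obtain ⟨m, hm, hmin⟩ := exists_min_image
    (B.filter fun x => ℓ x = ℓ a.1 ∧ σ a.1 < σ x ∧ σ x ≤ σ b.1) σ
    ⟨b.1, mem_filter.2 ⟨b.2, hℓ.symm, h, le_rfl⟩⟩
  obtain ⟨hmB, hmℓ, hlt, hle⟩ := mem_filter.1 hm
  refine ⟨⟨m, hmB⟩, (adj_iff_of_lt hlt).2 ⟨hmℓ.symm, fun x hx hxℓ hxm => ?_⟩, hlt, hle⟩
  obtain ⟨hx₁, hx₂⟩ : σ a.1 < σ x ∧ σ x < σ m := hxm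
  have := hmin x (mem_filter.2 ⟨hx, hxℓ, hx₁, by omega⟩)
  omega

section Injective

variable (hinj : Set.InjOn (fun x => (ℓ x, σ x)) B)
include hinj

theorem eq_of_adj_of_adj {a b b' : B} (hb : (consecutiveGraph B ℓ σ).Adj a b)
    (hb' : (consecutiveGraph B ℓ σ).Adj a b') (h : σ a.1 < σ b.1) (h' : σ a.1 < σ b'.1) :
    b = b' := by
  rw [adj_iff_of_lt h] at hb
  rw [adj_iff_of_lt h'] at hb'
  rcases lt_trichotomy (σ b.1) (σ b'.1) with hlt | heq | hgt
  · exact absurd ⟨h, hlt⟩ (hb'.2 b b.2 hb.1.symm)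
  · exact Subtype.ext (hinj b.2 b'.2 (Prod.ext (hb.1.symm.trans hb'.1) heq))
  · exact absurd ⟨h', hgt⟩ (hb.2 b' b'.2 hb'.1.symm)

theorem reachable_of_line_eq {a b : B} (hℓ : ℓ a.1 = ℓ b.1) :
    (consecutiveGraph B ℓ σ).Reachable a b := by
  wlog h : σ a.1 ≤ σ b.1 generalizing a b
  · exact (this hℓ.symm (le_of_not_ge h)).symm
  induction hN : σ b.1 - σ a.1 using Nat.strong_induction_on generalizing a with
  | _ N ih =>
    rcases h.lt_or_eq with hlt | heq
    · obtain ⟨m, ham, hm₁, hm₂⟩ := exists_adj_of_lt hℓ hlt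
      exact ham.reachable.trans
        (ih _ (by omega) ((line_eq_of_adj ham).symm.trans hℓ) hm₂ rfl)
    · rw [Subtype.ext (hinj a.2 b.2 (Prod.ext hℓ heq))]

theorem card_edgeSet_add_card_image_le :
    Nat.card (consecutiveGraph B ℓ σ).edgeSet + #(B.image ℓ) ≤ #B := by
  classical
  let HasSucc : ℕ × ℕ → Prop := fun c => ∃ x ∈ B, ℓ x = ℓ c ∧ σ c < σ x
  have hlines : #(B.image ℓ) ≤ #(B.filter fun c => ¬HasSucc c) := by
    suffices B.image ℓ ⊆ (B.filter fun c => ¬HasSucc c).image ℓ from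
      (card_le_card this).trans card_image_le
    intro l hl
    obtain ⟨c, hc, rfl⟩ := mem_image.1 hl
    obtain ⟨m, hm, hmax⟩ := exists_max_image (B.filter fun x => ℓ x = ℓ c) σ
      ⟨c, mem_filter.2 ⟨hc, rfl⟩⟩
    obtain ⟨hmB, hmℓ⟩ := mem_filter.1 hm
    refine mem_image.2 ⟨m, mem_filter.2 ⟨hmB, fun ⟨x, hx, hxℓ, hlt⟩ => ?_⟩, hmℓ⟩
    exact (hmax x (mem_filter.2 ⟨hx, hxℓ.trans hmℓ⟩)).not_gt hlt
  have hedges : Nat.card (consecutiveGraph B ℓ σ).edgeSet ≤ #(B.filter HasSucc) := by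
    rw [Nat.card_eq_fintype_card, ← edgeFinset_card]
    refine card_le_card_of_forall_subsingleton
      (fun e c => ∃ a b : B, e = s(a, b) ∧ a.1 = c ∧ σ a.1 < σ b.1) (fun e he => ?_) ?_
    · induction e using Sym2.ind with
      | h a b =>
        rw [mem_edgeFinset, mem_edgeSet] at he
        have hℓ := line_eq_of_adj he
        have hσ : σ a.1 ≠ σ b.1 := fun h => he.ne (Subtype.ext (hinj a.2 b.2 (Prod.ext hℓ h)))
        rcases hσ.lt_or_gt with h | h
        · exact ⟨a, mem_filter.2 ⟨a.2, b, b.2, hℓ.symm, h⟩, a, b, rfl, rfl, h⟩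
        · exact ⟨b, mem_filter.2 ⟨b.2, a, a.2, hℓ, h⟩, b, a, Sym2.eq_swap, rfl, h⟩
    · rintro c - e ⟨he, a, b, rfl, rfl, hab⟩ e' ⟨he', a', b', rfl, hc, hab'⟩
      obtain rfl : a = a' := Subtype.ext hc.symm
      rw [mem_edgeFinset, mem_edgeSet] at he he'
      rw [eq_of_adj_of_adj hinj he he' hab hab']
  have := card_filter_add_card_filter_not (s := B) HasSucc
  omega

end Injective

end consecutiveGraph

theorem SimpleGraph.Connected.isAcyclic_of_card_edgeSet_lt {V : Type*} [Finite V]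
    {G : SimpleGraph V} (h : G.Connected) (hcard : Nat.card G.edgeSet < Nat.card V) :
    G.IsAcyclic :=
  (isTree_iff_connected_and_card.2
    ⟨h, le_antisymm hcard h.card_vert_le_card_edgeSet_add_one⟩).isAcyclic

section ConnectionGraph

variable {B : Finset (ℕ × ℕ)}

theorem connectionGraph_reachable_of_fst_eq {a b : B} (h : a.1.1 = b.1.1) :
    (connectionGraph B).Reachable a b := by
  rw [connectionGraph_eq_sup]
  exact (consecutiveGraph.reachable_of_line_eq (fun _ _ _ _ h => h) h).mono le_sup_left

theorem connectionGraph_reachable_of_snd_eq {a b : B} (h : a.1.2 = b.1.2) :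
    (connectionGraph B).Reachable a b := by
  rw [connectionGraph_eq_sup]
  exact (consecutiveGraph.reachable_of_line_eq
    (fun _ _ _ _ h => Prod.ext (congrArg Prod.snd h) (congrArg Prod.fst h)) h).mono le_sup_right

variable (B) in
theorem card_edgeSet_connectionGraph_add_le :
    Nat.card (connectionGraph B).edgeSet + #(B.image Prod.fst) + #(B.image Prod.snd) ≤
      2 * #B := by
  have hrows := consecutiveGraph.card_edgeSet_add_card_image_le (B := B) (ℓ := Prod.fst)
    (σ := Prod.snd) fun _ _ _ _ h => h
  have hcols := consecutiveGraph.card_edgeSet_add_card_image_le (B := B) (ℓ := Prod.snd)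
    (σ := Prod.fst) fun _ _ _ _ h => Prod.ext (congrArg Prod.snd h) (congrArg Prod.fst h)
  have hsup : Nat.card (connectionGraph B).edgeSet ≤
      Nat.card (consecutiveGraph B Prod.fst Prod.snd).edgeSet +
        Nat.card (consecutiveGraph B Prod.snd Prod.fst).edgeSet := by
    simp only [connectionGraph_eq_sup, edgeSet_sup, Nat.card_coe_set_eq]
    exact Set.ncard_union_le _ _
  omega

theorem exists_not_reachable_connectionGraph
    (hcard : #B < #(B.image Prod.fst) + #(B.image Prod.snd))
    (hcycle : ¬(connectionGraph B).IsAcyclic) :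
    ∃ a b : B, ¬(connectionGraph B).Reachable a b := by
  obtain ⟨v, -⟩ := not_forall.1 hcycle
  by_contra! h
  have : Nonempty B := ⟨v⟩
  refine hcycle (Connected.isAcyclic_of_card_edgeSet_lt ⟨h⟩ ?_)
  have := card_edgeSet_connectionGraph_add_le B
  rw [Nat.card_eq_finsetCard]
  omega

theorem exists_potential_of_not_reachable {G : Type*} [AddGroup G] {a b : B}
    (hab : ¬(connectionGraph B).Reachable a b) {g : G} (hg : g ≠ 0) :
    ∃ x y : ℕ → G, (∀ rc ∈ B, x rc.1 + y rc.2 = 0) ∧ y a.1.2 ≠ y b.1.2 := by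
  classical
  let MeetsRow : ℕ → Prop := fun r => ∃ u : B, (connectionGraph B).Reachable a u ∧ u.1.1 = r
  let MeetsCol : ℕ → Prop := fun c => ∃ u : B, (connectionGraph B).Reachable a u ∧ u.1.2 = c
  have hcell : ∀ rc ∈ B, MeetsRow rc.1 ↔ MeetsCol rc.2 := fun rc h =>
    ⟨fun ⟨_, hu, hr⟩ => ⟨⟨rc, h⟩, hu.trans (connectionGraph_reachable_of_fst_eq hr), rfl⟩,
      fun ⟨_, hu, hc⟩ => ⟨⟨rc, h⟩, hu.trans (connectionGraph_reachable_of_snd_eq hc), rfl⟩⟩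
  refine ⟨fun r => if MeetsRow r then 0 else -g, fun c => if MeetsCol c then 0 else g,
    fun rc h => ?_, ?_⟩
  · by_cases hr : MeetsRow rc.1
    · simp [hr, (hcell rc h).1 hr]
    · simp [hr, mt (hcell rc h).2 hr]
  · have ha : MeetsCol a.1.2 := ⟨a, .rfl, rfl⟩
    have hb : ¬MeetsCol b.1.2 := fun ⟨_, hu, hc⟩ =>
      hab (hu.trans (connectionGraph_reachable_of_snd_eq hc))
    simpa [ha, hb] using hg.symm

end ConnectionGraph

def gridWindow {G : Type*} {M N : ℕ} (T : ZMod M × ZMod N → G) (B : Finset (ℕ × ℕ))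
    (ij : ZMod M × ZMod N) : B → G :=
  fun u => T (ij.1 + u.1.1, ij.2 + u.1.2)

theorem exists_ne_zero_gridWindow_eq {G : Type*} [AddCommGroup G] {M N n k : ℕ}
    {p : Fin n → ℕ} {q : Fin k → ℕ} {S : ZMod N → G} {Q : ZMod M → G}
    {T : ZMod M × ZMod N → G} {B : Finset (ℕ × ℕ)}
    (hS : Function.Surjective fun j : ZMod N => fun t : Fin n => S (j + p t))
    (hQ : ∀ w : Fin k → G, ∃ i : ZMod M, ∃ g : G, ∀ t, Q (i + q t) = w t + g)
    (hT : ∀ i j, T (i, j) = S j + Q i)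
    (hcells : ∀ rc ∈ B, rc.1 ∈ Set.range q ∧ rc.2 ∈ Set.range p)
    {x y : ℕ → G} (hxy : ∀ rc ∈ B, x rc.1 + y rc.2 = 0)
    (hy : ∃ s₁ s₂, y (p s₁) ≠ y (p s₂)) :
    ∃ ij, ij ≠ 0 ∧ gridWindow T B ij = gridWindow T B 0 := by
  obtain ⟨i, g₀, hi⟩ := hQ fun t => Q (q t) + x (q t)
  obtain ⟨j, hj⟩ := hS fun s => S (p s) + y (p s) - g₀
  have hj' : ∀ s, S (j + p s) = S (p s) + y (p s) - g₀ := fun s => congrFun hj s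
  refine ⟨(i, j), fun h => ?_, ?_⟩
  · obtain ⟨s₁, s₂, hy⟩ := hy
    refine hy ?_
    have hconst : ∀ s, y (p s) = g₀ := fun s => by
      have := hj' s
      rw [show j = 0 from congrArg Prod.snd h, zero_add, add_sub_assoc, left_eq_add] at this
      exact sub_eq_zero.1 this
    rw [hconst, hconst]
  · ext ⟨⟨r, c⟩, hu⟩
    obtain ⟨⟨t, rfl⟩, ⟨s, rfl⟩⟩ := hcells _ hu
    simp only [gridWindow, hT, Prod.fst_zero, Prod.snd_zero, zero_add, hj', hi]
    rw [show S (p s) + y (p s) - g₀ + (Q (q t) + x (q t) + g₀) =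
      S (p s) + Q (q t) + (x (q t) + y (p s)) by abel, hxy _ hu, add_zero]

theorem exists_filling_forall_not_occurs {G : Type*} [Fintype G] {M N : ℕ} [NeZero M]
    [NeZero N] {T : ZMod M × ZMod N → G} {B : Finset (ℕ × ℕ)}
    (hcard : M * N = Fintype.card G ^ #B) (hT : ¬Function.Injective (gridWindow T B)) :
    ∃ f : ℕ × ℕ → G, ∀ ij : ZMod M × ZMod N,
      ¬∀ rc ∈ B, T (ij.1 + (rc.1 : ZMod M), ij.2 + (rc.2 : ZMod N)) = f rc := by
  classical
  obtain ⟨f, hf⟩ : ∃ f, f ∉ Set.range (gridWindow T B) := by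
    by_contra! h
    exact hT ((Fintype.bijective_iff_surjective_and_card _).2 ⟨h, by simp [hcard]⟩).1
  refine ⟨fun rc => if h : rc ∈ B then f ⟨rc, h⟩ else T 0, fun ij hall => hf ⟨ij, ?_⟩⟩
  ext ⟨rc, h⟩
  simp [gridWindow, h, hall rc h]

theorem cyclic_pattern_missing_filling_general
    (G : Type*) [AddCommGroup G] [Fintype G] (d n k : ℕ)
    (hcardG : Fintype.card G = d) (hd : 2 ≤ d) (hk : 1 ≤ k)
    (p : Fin n → ℕ) (q : Fin k → ℕ) (hp : IsComb n p) (hq : IsComb k q)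
    (S : ZMod (d ^ n) → G)
    (hS : Function.Bijective
      (fun i : ZMod (d ^ n) => fun t : Fin n => S (i + (p t : ZMod (d ^ n)))))
    (Q : ZMod (d ^ (k - 1)) → G)
    (hQ : ∀ w : Fin k → G, ∃! i : ZMod (d ^ (k - 1)),
      ∃ g : G, ∀ t : Fin k, Q (i + (q t : ZMod (d ^ (k - 1)))) = w t + g)
    (B : Finset (ℕ × ℕ)) (hcard : B.card = n + k - 1)
    (hcols : B.image Prod.snd = Finset.image (fun t => p t) Finset.univ)
    (hrows : B.image Prod.fst = Finset.image (fun t => q t) Finset.univ)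
    (hcycle : ¬ (connectionGraph B).IsAcyclic)
    (T : ZMod (d ^ (k - 1)) × ZMod (d ^ n) → G)
    (hT : ∀ i j, T (i, j) = S j + Q i) :
    ∃ f : ℕ × ℕ → G, ∀ ij : ZMod (d ^ (k - 1)) × ZMod (d ^ n),
      ¬ ∀ rc ∈ B, T (ij.1 + (rc.1 : ZMod (d ^ (k - 1))), ij.2 + (rc.2 : ZMod (d ^ n))) = f rc := by
  have : NeZero (d ^ n) := ⟨pow_ne_zero _ (by omega)⟩
  have : NeZero (d ^ (k - 1)) := ⟨pow_ne_zero _ (by omega)⟩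
  have : Nontrivial G := Fintype.one_lt_card_iff_nontrivial.1 (by omega)
  have hnrows : #(B.image Prod.fst) = k := by
    rw [hrows, card_image_of_injective _ hq.1.injective, card_univ, Fintype.card_fin]
  have hncols : #(B.image Prod.snd) = n := by
    rw [hcols, card_image_of_injective _ hp.1.injective, card_univ, Fintype.card_fin]
  have hcells : ∀ rc ∈ B, rc.1 ∈ Set.range q ∧ rc.2 ∈ Set.range p := fun rc h =>
    ⟨by simpa [hrows] using mem_image_of_mem Prod.fst h,
      by simpa [hcols] using mem_image_of_mem Prod.snd h⟩
  obtain ⟨a, b, hab⟩ := exists_not_reachable_connectionGraph (by omega) hcycle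
  obtain ⟨g, hg⟩ := exists_ne (0 : G)
  obtain ⟨x, y, hxy, hy⟩ := exists_potential_of_not_reachable hab hg
  obtain ⟨s₁, hs₁⟩ := (hcells a.1 a.2).2
  obtain ⟨s₂, hs₂⟩ := (hcells b.1 b.2).2
  obtain ⟨ij, hij, hwin⟩ := exists_ne_zero_gridWindow_eq hS.2 (fun w => (hQ w).exists) hT
    hcells hxy ⟨s₁, s₂, by rwa [hs₁, hs₂]⟩
  refine exists_filling_forall_not_occurs ?_ fun hinj => hij (hinj hwin)
  rw [hcardG, hcard, ← pow_add]
  congr 1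
  omega

/-- if the connection graph of the block pattern `B` contains a cycle
(is not acyclic), then some filling of `B` occurs nowhere in the grid `T(i,j) = S(j) + Q(i)`. -/
theorem cyclic_pattern_missing_filling
    (G : Type*) [AddCommGroup G] [Fintype G] (d n k : ℕ)
    (hcardG : Fintype.card G = d) (hd : 2 ≤ d) (hn : 1 ≤ n) (hk : 1 ≤ k)
    (p : Fin n → ℕ) (q : Fin k → ℕ) (hp : IsComb n p) (hq : IsComb k q)
    (S : ZMod (d ^ n) → G)
    (hS : Function.Bijective
      (fun i : ZMod (d ^ n) => fun t : Fin n => S (i + (p t : ZMod (d ^ n)))))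
    (Q : ZMod (d ^ (k - 1)) → G)
    (hQ : ∀ w : Fin k → G, ∃! i : ZMod (d ^ (k - 1)),
      ∃ g : G, ∀ t : Fin k, Q (i + (q t : ZMod (d ^ (k - 1)))) = w t + g)
    (B : Finset (ℕ × ℕ)) (hcard : B.card = n + k - 1)
    (hcols : B.image Prod.snd = Finset.image (fun t => p t) Finset.univ)
    (hrows : B.image Prod.fst = Finset.image (fun t => q t) Finset.univ)
    (hcycle : ¬ (connectionGraph B).IsAcyclic)
    (T : ZMod (d ^ (k - 1)) × ZMod (d ^ n) → G)
    (hT : ∀ i j, T (i, j) = S j + Q i) :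
    ∃ f : ℕ × ℕ → G, ∀ ij : ZMod (d ^ (k - 1)) × ZMod (d ^ n),
      ¬ ∀ rc ∈ B, T (ij.1 + (rc.1 : ZMod (d ^ (k - 1))), ij.2 + (rc.2 : ZMod (d ^ n))) = f rc :=
  cyclic_pattern_missing_filling_general G d n k hcardG hd hk p q hp hq S hS Q hQ B hcard hcols
    hrows hcycle T hT
end

section
/- For all integers n and k with 3 ≤ k < n, there exists a cyclic difference sequence for k-permutations of ZMod n; that is, setting M = (n-1)(n-2)⋯(n-k+1), there exists a function U : ZMod M → ZMod n such that the map sending each position i ∈ ZMod M to the window (U(i), U(i+1), …, U(i+k-2)) is a bijection onto the set of difference patterns of injective k-tuples over ZMod n. -/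
/-- Partial sums of a `(k-1)`-tuple `d` over `ZMod n`: the `t`-th partial sum is
`d 0 + d 1 + ⋯ + d (t-1)` (so the `0`-th partial sum is `0`). -/
def partialSums (n k : ℕ) (d : Fin (k - 1) → ZMod n) : Fin k → ZMod n :=
  fun t => ∑ j : Fin (k - 1), if (j : ℕ) < (t : ℕ) then d j else 0

/-- `d` is a difference pattern of some injective `k`-tuple over `ZMod n` iff its `k`
partial sums `0, d₁, d₁+d₂, …, d₁+⋯+d_{k-1}` are pairwise distinct. -/
def IsDiffPattern (n k : ℕ) (d : Fin (k - 1) → ZMod n) : Prop :=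
  Function.Injective (partialSums n k d)

/-!
A difference pattern `d` of length `k - 1` is an edge, from its first `k - 2` entries to its last
`k - 2` entries, of a de Bruijn-type digraph, and a cyclic difference sequence is precisely an
Eulerian circuit of it. The digraph is balanced: sending the pattern of `(x₁, …, x_k)` to that of
`(x₂, …, x_k, x₁)` is a bijection from the edges ending at a vertex onto those leaving it. Its edges
are strongly connected: every pattern is read off the first `k` entries of some arrangement of
`ZMod n`, and sliding the window by one step realizes right multiplication by permutations that
generate the symmetric group.

An Eulerian circuit is found among the permutations `π` of the edges with each `π e` leaving
where `e` ends: take one whose cycle through a fixed edge is largest. If an edge `w` outside this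
cycle continues an edge `u` on it, then swapping `u` with the predecessor of `w` keeps the
property and merges the two cycles, so the cycle contains every edge.
-/

open Function Equiv Relation Finset Fin

namespace Equiv.Perm

variable {α : Type*} {π : Perm α} {a b x : α}

theorem sameCycle_mul_swap_of_sameCycle_right [DecidableEq α] [Finite α]
    (hab : ¬π.SameCycle a b) (hx : π.SameCycle b x) : (π * swap a b).SameCycle a x := by
  have step : ∀ y, π.SameCycle b y → (π * swap a b).SameCycle a y →
      (π * swap a b).SameCycle a (π y) := by
    intro y hby hay
    by_cases hyb : y = b
    · subst hyb
      exact ⟨1, by simp⟩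
    · have hya : y ≠ a := fun h => hab (h ▸ hby.symm)
      simpa [swap_apply_of_ne_of_ne hya hyb] using sameCycle_apply_right.2 hay
  obtain ⟨j, rfl⟩ := (sameCycle_apply_left.2 hx).exists_nat_pow_eq
  induction j with
  | zero => exact ⟨1, by simp⟩
  | succ j ih =>
    rw [pow_succ', mul_apply]
    exact step _ (sameCycle_pow_right.2 (sameCycle_apply_right.2 .rfl))
      (ih (sameCycle_pow_right.2 (sameCycle_apply_right.2 .rfl)))

theorem sameCycle_mul_swap_of_sameCycle_left [DecidableEq α] [Finite α]
    (hab : ¬π.SameCycle a b) (hx : π.SameCycle a x) : (π * swap a b).SameCycle a x := by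
  have hba : ¬π.SameCycle b a := fun h => hab h.symm
  have hbx := sameCycle_mul_swap_of_sameCycle_right hba hx
  have hba' := sameCycle_mul_swap_of_sameCycle_right hba (SameCycle.refl π a)
  rw [swap_comm] at hbx hba'
  exact hba'.symm.trans hbx

theorem exists_zmod_equiv_of_forall_sameCycle [Fintype α] (h : ∀ x, π.SameCycle a x) :
    ∃ σ : ZMod (Fintype.card α) ≃ α, ∀ i, σ (i + 1) = π (σ i) := by
  have hmem : ∀ x, x ∈ MulAction.orbit (Subgroup.zpowers π) a := fun x =>
    let ⟨k, hk⟩ := h x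
    ⟨⟨π ^ k, Subgroup.zpow_mem_zpowers π k⟩, hk⟩
  let σ := (MulAction.orbitZPowersEquiv π a).symm.trans (subtypeUnivEquiv hmem)
  have hstep : ∀ i, σ (i + 1) = π (σ i) := by
    intro i
    rw [← ZMod.intCast_zmod_cast i, ← Int.cast_one, ← Int.cast_add, add_comm]
    simp only [σ, trans_apply, MulAction.orbitZPowersEquiv_symm_apply', subtypeUnivEquiv_apply,
      zpow_one_add, mul_smul]
    rfl
  have hcard : Fintype.card α = Function.minimalPeriod (π • ·) a := by
    rw [← Nat.card_eq_fintype_card, ← Nat.card_congr σ, Nat.card_zmod]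
  refine ⟨(ZMod.ringEquivCongr hcard).toEquiv.trans σ, fun i => ?_⟩
  simp [hstep]

end Equiv.Perm

section Eulerian

-- `E` is the edge set of a multidigraph on `V`, with source map `s` and target map `t`.
variable {E V : Type*} {s t : E → V}

def IsSuccessorPerm (s t : E → V) (π : Perm E) : Prop := ∀ e, t e = s (π e)

theorem IsSuccessorPerm.mul_swap [DecidableEq E] {π : Perm E} (hπ : IsSuccessorPerm s t π)
    {a b : E} (hab : t a = t b) : IsSuccessorPerm s t (π * swap a b) := by
  intro e
  rcases eq_or_ne e a with rfl | hea
  · simpa [hab] using hπ b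
  rcases eq_or_ne e b with rfl | heb
  · simpa [← hab] using hπ a
  · simpa [swap_apply_of_ne_of_ne hea heb] using hπ e

theorem exists_isSuccessorPerm_forall_sameCycle [Fintype E] [DecidableEq E] {π₀ : Perm E}
    (h₀ : IsSuccessorPerm s t π₀) (hconn : ∀ e f, ReflTransGen (fun a b => t a = s b) e f)
    (e₀ : E) : ∃ π, IsSuccessorPerm s t π ∧ ∀ x, π.SameCycle e₀ x := by
  have : Nonempty {π // IsSuccessorPerm s t π} := ⟨⟨π₀, h₀⟩⟩
  obtain ⟨⟨π, hπ⟩, hmax⟩ :=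
    Finite.exists_max fun π : {π // IsSuccessorPerm s t π} => #{x | π.1.SameCycle e₀ x}
  refine ⟨π, hπ, fun x => ?_⟩
  have closed : ∀ u w, π.SameCycle e₀ u → t u = s w → π.SameCycle e₀ w := by
    intro u w hu huw
    by_contra hw
    set b := π⁻¹ w
    have hb : ¬π.SameCycle e₀ b := fun h =>
      hw (by simpa [b] using Perm.sameCycle_apply_right.2 h)
    have hub : ¬π.SameCycle u b := fun h => hb (hu.trans h)
    have htub : t u = t b := by rw [huw, hπ b]; simp [b]
    have hgrow : ({x | π.SameCycle e₀ x} : Finset E) ⊂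
        ({x | (π * swap u b).SameCycle e₀ x} : Finset E) := by
      refine (Finset.ssubset_iff_of_subset fun x hx => ?_).2 ⟨b, ?_, by simpa using hb⟩
      · simp only [Finset.mem_filter, Finset.mem_univ, true_and] at hx ⊢
        exact (Perm.sameCycle_mul_swap_of_sameCycle_left hub hu.symm).symm.trans
          (Perm.sameCycle_mul_swap_of_sameCycle_left hub (hu.symm.trans hx))
      · simp only [Finset.mem_filter, Finset.mem_univ, true_and]
        exact (Perm.sameCycle_mul_swap_of_sameCycle_left hub hu.symm).symm.trans
          (Perm.sameCycle_mul_swap_of_sameCycle_right hub .rfl)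
    exact (hmax ⟨_, hπ.mul_swap htub⟩).not_gt (Finset.card_lt_card hgrow)
  induction hconn e₀ x with
  | refl => exact .rfl
  | tail _ hst ih => exact closed _ _ ih hst

theorem exists_eulerian_circuit [Fintype E] [DecidableEq E] [Nonempty E] {π₀ : Perm E}
    (h₀ : IsSuccessorPerm s t π₀) (hconn : ∀ e f, ReflTransGen (fun a b => t a = s b) e f) :
    ∃ σ : ZMod (Fintype.card E) ≃ E, ∀ i, t (σ i) = s (σ (i + 1)) := by
  obtain ⟨π, hπ, hcyc⟩ := exists_isSuccessorPerm_forall_sameCycle h₀ hconn (Classical.arbitrary E)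
  obtain ⟨σ, hσ⟩ := Perm.exists_zmod_equiv_of_forall_sameCycle hcyc
  exact ⟨σ, fun i => by rw [hσ, hπ]⟩

end Eulerian

theorem Subgroup.reflTransGen_mul_right_of_closure_eq_top {Q : Type*} [Group Q] [Finite Q]
    {S : Set Q} (hS : Subgroup.closure S = ⊤) (a b : Q) :
    ReflTransGen (fun x y => ∃ g ∈ S, y = x * g) a b := by
  have hS' : Submonoid.closure S = ⊤ := by
    rw [← Subgroup.closure_toSubmonoid_of_finite, hS, Subgroup.top_toSubmonoid]
  have h := Submonoid.induction_of_closure_eq_top_right hS' (a⁻¹ * b)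
    (motive := fun g => ReflTransGen (fun x y => ∃ g ∈ S, y = x * g) a (a * g))
    (by simpa using ReflTransGen.refl) fun x y hy h => h.tail ⟨y, hy, (mul_assoc _ _ _).symm⟩
  simpa using h

section Sliding

variable {N ℓ : ℕ}

def shiftingPerms (N ℓ : ℕ) : Set (Perm (Fin N)) :=
  {g | ∀ i : Fin N, (i : ℕ) ≤ ℓ → (g i : ℕ) = i + 1}

theorem closure_shiftingPerms (h : ℓ + 2 < N) : Subgroup.closure (shiftingPerms N ℓ) = ⊤ := by
  have : NeZero N := ⟨by omega⟩
  set H := Subgroup.closure (shiftingPerms N ℓ)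
  let c := cycleRange (⟨ℓ + 1, by omega⟩ : Fin N)
  have hc_lt : ∀ i : Fin N, (i : ℕ) ≤ ℓ → (c i : ℕ) = i + 1 := fun i hi =>
    coe_cycleRange_of_lt (show (i : ℕ) < ℓ + 1 by omega)
  have hc_gt : ∀ m : Fin N, ℓ + 1 < m → c m = m := fun m hm => cycleRange_of_gt hm
  have hc_pow : ∀ j (hj : j ≤ ℓ + 1), (c ^ j) 0 = ⟨j, by omega⟩ := by
    intro j hj
    induction j with
    | zero => rfl
    | succ j ih =>
      refine Fin.ext ?_
      rw [pow_succ', Perm.mul_apply, ih (by omega), hc_lt _ (show j ≤ ℓ by omega)]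
  have hc : c ∈ H := Subgroup.subset_closure hc_lt
  have hswap_zero : ∀ m : Fin N, ℓ + 1 < m → swap 0 m ∈ H := by
    intro m hm
    have hmem : swap 0 m * c ∈ H := Subgroup.subset_closure fun i hi => by
      have hci := hc_lt i hi
      rw [Perm.mul_apply, swap_apply_of_ne_of_ne (Fin.ne_of_val_ne (by simp [hci]))
        (Fin.ne_of_val_ne (by omega)), hci]
    simpa using H.mul_mem hmem (H.inv_mem hc)
  have hswap : ∀ j m : Fin N, (j : ℕ) ≤ ℓ + 1 → ℓ + 1 < m → swap j m ∈ H := by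
    intro j m hj hm
    have := H.mul_mem (H.mul_mem (H.pow_mem hc j) (hswap_zero m hm)) (H.inv_mem (H.pow_mem hc j))
    rwa [← swap_apply_apply, hc_pow j hj, Perm.coe_pow, iterate_fixed (hc_gt m hm)] at this
  have hstar : ∀ a : Fin N, swap 0 a ∈ H := by
    intro a
    by_cases ha : ℓ + 1 < a
    · exact hswap_zero a ha
    · let m : Fin N := ⟨ℓ + 2, h⟩
      exact SubmonoidClass.swap_mem_trans H (hswap_zero m (Nat.lt_succ_self _))
        (swap_comm a m ▸ hswap a m (by omega) (Nat.lt_succ_self _))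
  rw [eq_top_iff, ← Perm.closure_isSwap, Subgroup.closure_le]
  rintro _ ⟨a, b, -, rfl⟩
  exact SubmonoidClass.swap_mem_trans H (swap_comm 0 a ▸ hstar a) (hstar b)

theorem Function.Embedding.reflTransGen_tail_eq_init {α : Type*} [Fintype α]
    (h : ℓ + 2 < Fintype.card α) (x y : Fin (ℓ + 2) ↪ α) :
    ReflTransGen (fun u v : Fin (ℓ + 2) ↪ α => tail u = init v) x y := by
  let e := (Fintype.equivFin α).symm
  let window (π : Perm (Fin (Fintype.card α))) : Fin (ℓ + 2) ↪ α :=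
    (castLEEmb h.le).trans (π.trans e).toEmbedding
  have window_surjective : Surjective window := fun x => by
    obtain ⟨π, hπ⟩ := Perm.exists_extending_pair _ _ (castLEEmb h.le).injective
      (e.symm.injective.comp x.injective)
    exact ⟨π, DFunLike.ext _ _ fun i => by simpa [window, e] using congrArg e (hπ i)⟩
  have window_step : ∀ π g, g ∈ shiftingPerms _ ℓ → tail (window π) = init (window (π * g)) :=
    fun π g hg => funext fun i => by
      simp only [window, tail, init, Embedding.trans_apply, coe_castLEEmb, Equiv.coe_toEmbedding,
        Equiv.trans_apply, Perm.mul_apply]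
      congr 2
      exact (Fin.ext (hg _ (show (i : ℕ) ≤ ℓ by omega))).symm
  obtain ⟨π, rfl⟩ := window_surjective x
  obtain ⟨π', rfl⟩ := window_surjective y
  refine ReflTransGen.lift window (fun a b hab => ?_) _ _
    (Subgroup.reflTransGen_mul_right_of_closure_eq_top (closure_shiftingPerms h) π π')
  obtain ⟨g, hg, rfl⟩ := hab
  exact window_step a g hg

end Sliding

theorem eq_window_of_tail_eq_init {R X : Type*} [AddMonoidWithOne R] {ℓ : ℕ}
    {w : R → Fin (ℓ + 1) → X} (hw : ∀ i, tail (w i) = init (w (i + 1))) (i : R) :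
    w i = fun j : Fin (ℓ + 1) => w (i + (j : ℕ)) 0 := by
  funext j
  induction j using Fin.induction generalizing i with
  | zero => simp
  | succ j ih =>
    calc w i j.succ = init (w (i + 1)) j := congrFun (hw i) j
      _ = w (i + 1 + (j : ℕ)) 0 := ih (i + 1)
      _ = w (i + ((j + 1 : ℕ))) 0 := by
        rw [add_comm (j : ℕ) 1, Nat.cast_add, Nat.cast_one, add_assoc]

theorem Fin.partialSum_last {M : Type*} [AddCommMonoid M] {n : ℕ} (f : Fin n → M) :
    partialSum f (last n) = ∑ i, f i := by
  rw [partialSum, val_last, List.take_of_length_le (List.length_ofFn ▸ le_rfl), List.sum_ofFn]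

section DiffPattern

variable {G : Type*} [AddCommGroup G] {ℓ : ℕ}

def successiveDiffs (x : Fin (ℓ + 1) → G) : Fin ℓ → G := fun i => x i.succ - x i.castSucc

theorem partialSum_successiveDiffs (x : Fin (ℓ + 1) → G) (j : Fin (ℓ + 1)) :
    partialSum (successiveDiffs x) j = x j - x 0 := by
  have h := congrFun (partialSum_left_neg x) j
  simp only [Pi.vadd_apply, vadd_eq_add, neg_add_eq_sub] at h
  exact eq_sub_of_add_eq' h

theorem successiveDiffs_partialSum (d : Fin ℓ → G) : successiveDiffs (partialSum d) = d :=
  funext fun i => (neg_add_eq_sub _ _).symm.trans (partialSum_right_neg d i)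

theorem injective_partialSum_successiveDiffs {x : Fin (ℓ + 1) → G} (hx : Injective x) :
    Injective (partialSum (successiveDiffs x)) := by
  rw [funext (partialSum_successiveDiffs x)]
  exact sub_left_injective.comp hx

theorem tail_successiveDiffs (x : Fin (ℓ + 2) → G) :
    tail (successiveDiffs x) = successiveDiffs (tail x) := rfl

theorem init_successiveDiffs (x : Fin (ℓ + 2) → G) :
    init (successiveDiffs x) = successiveDiffs (init x) := rfl

variable (G ℓ) in
abbrev DiffPattern := {d : Fin ℓ → G // Injective (partialSum d)}

def DiffPattern.ofInjective {x : Fin (ℓ + 1) → G} (hx : Injective x) : DiffPattern G ℓ :=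
  ⟨successiveDiffs x, injective_partialSum_successiveDiffs hx⟩

def diffPatternEquivEmbedding : DiffPattern G ℓ ≃ (Fin ℓ ↪ {g : G // g ≠ 0}) where
  toFun d := ⟨fun i => ⟨partialSum d.1 i.succ, fun h => succ_ne_zero i <|
      d.2 (by rw [h, partialSum_zero])⟩,
    fun i j h => succ_injective _ (d.2 (congrArg Subtype.val h))⟩
  invFun y := ⟨successiveDiffs (cons 0 fun i => (y i : G)), injective_partialSum_successiveDiffs <|
    cons_injective_iff.2 ⟨fun ⟨i, hi⟩ => (y i).2 hi, Subtype.val_injective.comp y.injective⟩⟩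
  left_inv d := by
    refine Subtype.ext ?_
    conv_rhs => rw [← successiveDiffs_partialSum d.1, ← cons_self_tail (partialSum d.1),
      partialSum_zero]
    rfl
  right_inv y := by
    ext i
    simp [partialSum_successiveDiffs]

theorem card_diffPattern [Fintype G] [DecidableEq G] :
    Fintype.card (DiffPattern G ℓ) = (Fintype.card G - 1).descFactorial ℓ := by
  rw [Fintype.card_congr diffPatternEquivEmbedding, Fintype.card_embedding_eq, Fintype.card_fin,
    Fintype.card_subtype_compl, Fintype.card_subtype_eq]

def rotateDiffs (d : Fin (ℓ + 1) → G) : Fin (ℓ + 1) → G := snoc (tail d) (-∑ i, d i)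

theorem partialSum_rotateDiffs (d : Fin (ℓ + 1) → G) (j : Fin (ℓ + 2)) :
    partialSum (rotateDiffs d) j = partialSum d (finRotate _ j) - d 0 := by
  induction j using lastCases with
  | last =>
    rw [finRotate_last, partialSum_zero, partialSum_last, rotateDiffs, sum_univ_castSucc,
      snoc_last, sum_univ_succ]
    simp only [snoc_castSucc, tail]
    abel
  | cast i =>
    rw [← partialSum_init, rotateDiffs, init_snoc, finRotate_apply, coeSucc_eq_succ,
      partialSum_succ', add_sub_cancel_left]

theorem rotateDiffs_injective : Injective (rotateDiffs : (Fin (ℓ + 1) → G) → _) := by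
  intro d d' h
  obtain ⟨htail, hsum⟩ := snoc_injective2 h
  rw [sum_univ_succ, sum_univ_succ, neg_inj, ← tail_def, ← tail_def, htail, add_left_inj] at hsum
  rw [← cons_self_tail d, ← cons_self_tail d', htail, hsum]

theorem injective_partialSum_rotateDiffs {d : Fin (ℓ + 1) → G} (hd : Injective (partialSum d)) :
    Injective (partialSum (rotateDiffs d)) := by
  rw [funext (partialSum_rotateDiffs d)]
  exact sub_left_injective.comp (hd.comp (finRotate _).injective)

theorem tail_eq_init_rotateDiffs (d : Fin (ℓ + 1) → G) : tail d = init (rotateDiffs d) := by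
  rw [rotateDiffs, init_snoc]

noncomputable def DiffPattern.rotate [Finite G] : Perm (DiffPattern G (ℓ + 1)) :=
  Equiv.ofBijective (fun d => ⟨rotateDiffs d.1, injective_partialSum_rotateDiffs d.2⟩) <|
    Finite.injective_iff_bijective.1 fun _ _ h =>
      Subtype.ext (rotateDiffs_injective (congrArg Subtype.val h))

theorem DiffPattern.reflTransGen_tail_eq_init [Fintype G] (h : ℓ + 2 < Fintype.card G)
    (d d' : DiffPattern G (ℓ + 1)) :
    ReflTransGen (fun a b : DiffPattern G (ℓ + 1) => tail a.1 = init b.1) d d' := by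
  let ofEmbedding (x : Fin (ℓ + 2) ↪ G) : DiffPattern G (ℓ + 1) := ofInjective x.injective
  have hsurj : Surjective ofEmbedding := fun d =>
    ⟨⟨partialSum d.1, d.2⟩, Subtype.ext (successiveDiffs_partialSum d.1)⟩
  obtain ⟨x, rfl⟩ := hsurj d
  obtain ⟨y, rfl⟩ := hsurj d'
  refine ReflTransGen.lift ofEmbedding (fun u v huv => ?_) _ _
    (Embedding.reflTransGen_tail_eq_init h x y)
  change tail (successiveDiffs u) = init (successiveDiffs v)
  rw [tail_successiveDiffs, init_successiveDiffs, huv]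

theorem exists_zmod_equiv_diffPattern_windows [Fintype G] [DecidableEq G]
    (h : ℓ + 2 < Fintype.card G) :
    ∃ (U : ZMod ((Fintype.card G - 1).descFactorial (ℓ + 1)) → G)
      (σ : ZMod ((Fintype.card G - 1).descFactorial (ℓ + 1)) ≃ DiffPattern G (ℓ + 1)),
      ∀ i, (fun j : Fin (ℓ + 1) => U (i + (j : ℕ))) = (σ i).1 := by
  have : Nonempty (DiffPattern G (ℓ + 1)) := by
    rw [← Fintype.card_pos_iff, card_diffPattern, Nat.descFactorial_pos]
    omega
  have := exists_eulerian_circuit (s := fun d : DiffPattern G (ℓ + 1) => init d.1)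
    (t := fun d => tail d.1) (π₀ := DiffPattern.rotate) (fun d => tail_eq_init_rotateDiffs d.1)
    (DiffPattern.reflTransGen_tail_eq_init h)
  rw [card_diffPattern] at this
  obtain ⟨σ, hσ⟩ := this
  exact ⟨fun i => (σ i).1 0, σ, fun i => (eq_window_of_tail_eq_init hσ i).symm⟩

end DiffPattern

theorem partialSums_eq_partialSum {n ℓ : ℕ} (d : Fin (ℓ + 1) → ZMod n) :
    partialSums n (ℓ + 2) d = partialSum d := by
  funext t
  induction t using Fin.induction with
  | zero => simp [partialSums]
  | succ t ih =>
    rw [partialSum_succ, ← ih]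
    change ∑ j : Fin (ℓ + 1), _ = ∑ j : Fin (ℓ + 1), _ + _
    rw [← Fintype.sum_ite_eq' t d, ← Finset.sum_add_distrib]
    refine Finset.sum_congr rfl fun j _ => ?_
    simp only [val_succ, val_castSucc, ← Fin.val_inj]
    split_ifs <;> first | rfl | (exfalso; omega) | simp

theorem isDiffPattern_iff {n ℓ : ℕ} {d : Fin (ℓ + 1) → ZMod n} :
    IsDiffPattern n (ℓ + 2) d ↔ Injective (partialSum d) := by
  rw [IsDiffPattern, partialSums_eq_partialSum]

/-- for all `3 ≤ k < n` there exists a cyclic difference sequence for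
`k`-permutations of `ZMod n`: a function `U : ZMod M → ZMod n`, with
`M = (n-1)(n-2)⋯(n-k+1)`, whose position-to-window map is a bijection onto the set of
difference patterns of injective `k`-tuples over `ZMod n`. -/
theorem exists_difference_sequence (n k : ℕ) (hk : 3 ≤ k) (hkn : k < n) :
    ∃ U : ZMod (Nat.descFactorial (n - 1) (k - 1)) → ZMod n,
      (∀ i : ZMod (Nat.descFactorial (n - 1) (k - 1)),
        IsDiffPattern n k
          (fun j : Fin (k - 1) =>
            U (i + (j.val : ZMod (Nat.descFactorial (n - 1) (k - 1)))))) ∧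
      (∀ d : Fin (k - 1) → ZMod n, IsDiffPattern n k d →
        ∃! i : ZMod (Nat.descFactorial (n - 1) (k - 1)),
          (fun j : Fin (k - 1) =>
            U (i + (j.val : ZMod (Nat.descFactorial (n - 1) (k - 1))))) = d) := by
  obtain ⟨ℓ, rfl⟩ : ∃ ℓ, k = ℓ + 2 := ⟨k - 2, by omega⟩
  have : NeZero n := ⟨by omega⟩
  have h := exists_zmod_equiv_diffPattern_windows (G := ZMod n) (ℓ := ℓ) (by rwa [ZMod.card])
  rw [ZMod.card] at h
  obtain ⟨U, σ, hσ⟩ := h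
  refine ⟨U, fun i => isDiffPattern_iff.2 (hσ i ▸ (σ i).2), fun d hd => ?_⟩
  refine ⟨σ.symm ⟨d, isDiffPattern_iff.1 hd⟩, (hσ _).trans (by rw [apply_symm_apply]), ?_⟩
  exact fun i hi => σ.eq_symm_apply.2 (Subtype.ext ((hσ i).symm.trans hi))
end

section
/- Let G be a finite additive abelian group with |G| = n, and let 2 ≤ k < n and 2 ≤ ℓ < n. Let S : ZMod (n!/(n-k)!) → G be a universal cycle for k-permutations of G: the map sending each position j to the window (S(j), S(j+1), …, S(j+k-1)) is a bijection onto the set of injective k-tuples over G. Let D : ZMod ((n-1)!/(n-ℓ)!) → G be a quotient (difference) string for ℓ-permutations of G: the map sending each position i to the translation-equivalence class of the window (D(i), D(i+1), …, D(i+ℓ-1)) is a bijection onto the set of translation-equivalence classes of injective ℓ-tuples over G. Form the torus T : ZMod ((n-1)!/(n-ℓ)!) × ZMod (n!/(n-k)!) → G, T(i,j) = S(j) + D(i). Let B be the cross-shaped block pattern B = {(0, c) : 0 ≤ c ≤ k-1} ∪ {(r, 0) : 0 ≤ r ≤ ℓ-1}, and let f : B → G be a filling such that the horizontal k-tuple (f(0,0),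 f(0,1), …, f(0,k-1)) is injective and the vertical ℓ-tuple (f(0,0), f(1,0), …, f(ℓ-1,0)) is injective. Then f occurs at exactly one position (i,j), where f occurs at (i,j) iff T(i + r, j + c) = f(r,c) for every (r,c) ∈ B. -/
/-- in the torus `T(i,j) = S(j) + D(i)` built from a universal cycle `S` for
`k`-permutations of a group `G` of order `n` and a quotient (difference) string `D` for
`ℓ`-permutations of `G`, every filling of the cross-shaped pattern
`B = {(0,c) : c < k} ∪ {(r,0) : r < ℓ}` whose horizontal `k`-tuple and vertical `ℓ`-tuple are
injective occurs at exactly one position. -/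
theorem permutation_torus_cross_unique_occurrence
    (G : Type*) [AddCommGroup G] [Fintype G] (n k l : ℕ)
    (hcard : Fintype.card G = n) (hk : 2 ≤ k) (hkn : k < n) (hl : 2 ≤ l) (hln : l < n)
    (S : ZMod (Nat.descFactorial n k) → G)
    (hS1 : ∀ j : ZMod (Nat.descFactorial n k),
      Function.Injective (fun t : Fin k => S (j + (t.val : ZMod (Nat.descFactorial n k)))))
    (hS2 : ∀ x : Fin k → G, Function.Injective x →
      ∃! j : ZMod (Nat.descFactorial n k),
        (fun t : Fin k => S (j + (t.val : ZMod (Nat.descFactorial n k)))) = x)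
    (D : ZMod (Nat.descFactorial (n - 1) (l - 1)) → G)
    (hD1 : ∀ i : ZMod (Nat.descFactorial (n - 1) (l - 1)),
      Function.Injective
        (fun t : Fin l => D (i + (t.val : ZMod (Nat.descFactorial (n - 1) (l - 1))))))
    (hD2 : ∀ x : Fin l → G, Function.Injective x →
      ∃! i : ZMod (Nat.descFactorial (n - 1) (l - 1)),
        ∃ c : G, ∀ t : Fin l,
          D (i + (t.val : ZMod (Nat.descFactorial (n - 1) (l - 1)))) = x t + c)
    (T : ZMod (Nat.descFactorial (n - 1) (l - 1)) × ZMod (Nat.descFactorial n k) → G)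
    (hT : ∀ i j, T (i, j) = S j + D i)
    (B : Set (ℕ × ℕ))
    (hB : B = {rc : ℕ × ℕ | (rc.1 = 0 ∧ rc.2 < k) ∨ (rc.2 = 0 ∧ rc.1 < l)})
    (f : ℕ × ℕ → G)
    (hfh : Function.Injective (fun c : Fin k => f (0, c.val)))
    (hfv : Function.Injective (fun r : Fin l => f (r.val, 0))) :
    ∃! ij : ZMod (Nat.descFactorial (n - 1) (l - 1)) × ZMod (Nat.descFactorial n k),
      ∀ rc ∈ B,
        T (ij.1 + (rc.1 : ZMod (Nat.descFactorial (n - 1) (l - 1))),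
           ij.2 + (rc.2 : ZMod (Nat.descFactorial n k))) = f rc := by

  obtain ⟨i₀, ⟨c₀, hc₀⟩, hiu⟩ := hD2 (fun r : Fin l => f (r.val, 0)) hfv
  have hD0 : D i₀ = f (0, 0) + c₀ := by
    have := hc₀ ⟨0, by omega⟩
    simpa using this
  have hyinj : Function.Injective (fun c : Fin k => f (0, c.val) - D i₀) :=
    fun a b h => hfh (by simpa using sub_left_injective h)
  obtain ⟨j₀, hj₀, hju⟩ := hS2 (fun c : Fin k => f (0, c.val) - D i₀) hyinj
  have hj₀' : ∀ t : Fin k, S (j₀ + (t.val : ZMod (Nat.descFactorial n k)))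
      = f (0, t.val) - D i₀ := fun t => congrFun hj₀ t
  refine ⟨(i₀, j₀), ?_, ?_⟩
  · intro rc hrc
    rw [hB] at hrc
    rcases hrc with ⟨h1, h2⟩ | ⟨h1, h2⟩
    · obtain ⟨r, c⟩ := rc
      simp only at h1 h2
      subst h1
      rw [hT]
      simp only [Nat.cast_zero, add_zero]
      rw [hj₀' ⟨c, h2⟩]
      abel
    · obtain ⟨r, c⟩ := rc
      simp only at h1 h2
      subst h1
      rw [hT]
      simp only [Nat.cast_zero, add_zero]
      have hr := hc₀ ⟨r, h2⟩
      rw [hr]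
      have h0 := hj₀' ⟨0, by omega⟩
      simp only [Nat.cast_zero, add_zero] at h0
      rw [h0, hD0]
      abel
  · rintro ⟨i, j⟩ hij
    have hi : i = i₀ := by
      apply hiu
      refine ⟨-S j, fun t => ?_⟩
      have := hij (t.val, 0) (by rw [hB]; exact Or.inr ⟨rfl, t.isLt⟩)
      rw [hT] at this
      simp only [Nat.cast_zero, add_zero] at this
      rw [← this]; abel
    subst hi
    have hj : j = j₀ := by
      apply hju
      funext t
      have := hij (0, t.val) (by rw [hB]; exact Or.inl ⟨rfl, t.isLt⟩)
      rw [hT] at this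
      simp only [Nat.cast_zero, add_zero] at this
      rw [← this]; abel
    subst hj
    rfl
end
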